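/- arXiv:0704.2578 — 8 statements merged into one kernel-verified Lean document; each statement's English description precedes it below -/
import Mathlib

section
/- Let p be a prime, O_L the ring of integers of a finite unramified extension L of ℚ_p (equivalently, a complete discrete valuation ring of characteristic 0 whose maximal ideal is generated by p and whose residue field k is finite), and let G* be a set of r×r matrices over O_L. The following three conditions are equivalent: (i) the rank over O_L of the submodule ∩_{D∈G*} ker(D) of O_L^r equals the dimension over k of the subspace ∩_{D∈G*} ker(D mod p) of k^r; (ii) whenever x ∈ O_L^r is such that for every D ∈ G* there exists y_D ∈ O_L^r with D·x = p·y_D, there exists x' ∈ O_L^r with D·x' = y_D for every D ∈ G*; (iii) there exist an integer 0 ≤ e ≤ r and Q ∈ GL_r(O_L) such that for every D ∈ G* the first e columns of Q⁻¹DQ vanish, i.e. Q⁻¹DQ = [[0, D̂],[0, D̃]] with D̂ ∈ M_{e,r−e}(O_L) and D̃ ∈ M_{r−e}(O_L), and there exist finitely many D_1,…,D_m ∈ G* and matrices Ĉ_i ∈ M_{r−e,e}(O_L), C̃_i ∈ M_{r−e}(O_L) (1 ≤ i ≤ m) with Σ_{i=1}^m (Ĉ_i D̂_i + C̃_i D̃_i)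 ∈ GL_{r−e}(O_L). -/
/-!
The common kernel `N = ⋂_{D ∈ G} ker D` is saturated in `O^r`, so over the PID `O` it is spanned by
part of a basis: there are `e = rank N` and `Q ∈ GL_r(O)` with `N = Q (O^e ⊕ 0)`. Every `Q⁻¹ D Q`
then vanishes on its first `e` columns; let `T_D` be the block of its last `r - e` columns.
Over the residue field, `dim ⋂ ker (D mod p) = e + dim ⋂ ker (T_D mod p)`, so (i) says that the
`T_D mod p` have no common nonzero kernel vector. Condition (ii) amounts to the `T_D` reflecting
divisibility by `p` (`T_D v ∈ p O^r` for all `D` forces `v ∈ p O^(r-e)`), which rules out such a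
kernel vector. Conversely, if there is none, finitely many of the `T_D mod p`, stacked, have a left
inverse; lifting it to `O` gives the `Ĉ_i, C̃_i` of (iii), and their combination is `≡ 1 mod p`,
hence invertible. Finally, an invertible combination as in (iii), for whatever `Q` it uses, makes
the corresponding `T_D` reflect divisibility by `p`, which gives back (ii).
-/

open Matrix Module IsLocalRing

def Fin.natAddLE {e r : ℕ} (he : e ≤ r) (j : Fin (r - e)) : Fin r := ⟨e + j, by omega⟩

section Blocks

variable {e r : ℕ} (he : e ≤ r)

theorem Fin.natAddLE_injective : Function.Injective (Fin.natAddLE he) := by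
  intro i j h
  ext
  simpa [Fin.natAddLE] using congrArg Fin.val h

theorem Fin.comp_natAddLE_eq_zero_iff {M : Type*} [Zero M] (v : Fin r → M) :
    v ∘ Fin.natAddLE he = 0 ↔ ∀ j : Fin r, e ≤ (j : ℕ) → v j = 0 := by
  refine ⟨fun h j hj => ?_, fun h => funext fun j => h _ (Nat.le_add_right e j)⟩
  have hj' : Fin.natAddLE he ⟨j - e, by omega⟩ = j := Fin.ext (by simp [Fin.natAddLE]; omega)
  simpa [hj'] using congrFun h ⟨j - e, by omega⟩

theorem Fin.sum_univ_eq_sum_castLE_add_sum_natAddLE {M : Type*} [AddCommMonoid M] (F : Fin r → M) :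
    ∑ j, F j = ∑ i : Fin e, F (Fin.castLE he i) + ∑ j : Fin (r - e), F (Fin.natAddLE he j) := by
  rw [← (finSumFinEquiv.trans (finCongr (Nat.add_sub_cancel' he))).sum_comp, Fintype.sum_sum_type]
  rfl

variable {R : Type*} [CommRing R]

theorem Matrix.mulVec_eq_submatrix_mulVec_of_cols_eq_zero (E : Matrix (Fin r) (Fin r) R)
    (hE : ∀ i j : Fin r, (j : ℕ) < e → E i j = 0) (c : Fin r → R) :
    E *ᵥ c = E.submatrix id (Fin.natAddLE he) *ᵥ (c ∘ Fin.natAddLE he) := by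
  ext i
  rw [mulVec, dotProduct, Fin.sum_univ_eq_sum_castLE_add_sum_natAddLE he,
    Finset.sum_eq_zero fun j _ => by rw [hE i _ j.isLt, zero_mul], zero_add]
  rfl

theorem Matrix.mul_eq_add_mul_submatrix_castLE_natAddLE {l n : Type*} [Fintype n]
    (C : Matrix l (Fin r) R) (A : Matrix (Fin r) n R) :
    C * A = C.submatrix id (Fin.castLE he) * A.submatrix (Fin.castLE he) id
      + C.submatrix id (Fin.natAddLE he) * A.submatrix (Fin.natAddLE he) id := by
  ext i j
  exact Fin.sum_univ_eq_sum_castLE_add_sum_natAddLE he _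

theorem Matrix.mulVec_mulVec_eq_of_cols_eq_zero {Q D : Matrix (Fin r) (Fin r) R} (hQ : IsUnit Q)
    (hD : ∀ i j : Fin r, (j : ℕ) < e → (Q⁻¹ * D * Q) i j = 0) (w : Fin r → R) :
    D *ᵥ (Q *ᵥ w) =
      Q *ᵥ ((Q⁻¹ * D * Q).submatrix id (Fin.natAddLE he) *ᵥ (w ∘ Fin.natAddLE he)) := by
  rw [← mulVec_eq_submatrix_mulVec_of_cols_eq_zero he _ hD, mulVec_mulVec, mulVec_mulVec,
    mul_assoc, mul_nonsing_inv_cancel_left _ _ ((isUnit_iff_isUnit_det Q).mp hQ)]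

end Blocks

section Field

theorem Submodule.finrank_comap_eq_finrank_add_finrank_ker {k V W : Type*} [Field k]
    [AddCommGroup V] [Module k V] [FiniteDimensional k V] [AddCommGroup W] [Module k W]
    {f : V →ₗ[k] W} (hf : Function.Surjective f) (K : Submodule k W) :
    finrank k (K.comap f) = finrank k K + finrank k (LinearMap.ker f) := by
  have hker : LinearMap.ker f ≤ K.comap f := fun x hx => by simp_all
  rw [← (f.domRestrict (K.comap f)).finrank_range_add_finrank_ker, LinearMap.range_domRestrict,
    Submodule.map_comap_eq_of_surjective hf, LinearMap.ker_domRestrict,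
    (Submodule.comapSubtypeEquivOfLe hker).finrank_eq]

theorem Matrix.finrank_iInf_ker_eq_add {k ι : Type*} [Field k] {e r : ℕ} (he : e ≤ r)
    (s : Set ι) (F E : ι → Matrix (Fin r) (Fin r) k) {P : Matrix (Fin r) (Fin r) k}
    (hP : IsUnit P) (hconj : ∀ D ∈ s, P⁻¹ * F D * P = E D)
    (hcols : ∀ D ∈ s, ∀ i j : Fin r, (j : ℕ) < e → E D i j = 0) :
    finrank k ↥(⨅ D ∈ s, LinearMap.ker (mulVecLin (F D))) =
      e + finrank k ↥(⨅ D ∈ s,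
        LinearMap.ker (mulVecLin ((E D).submatrix id (Fin.natAddLE he)))) := by
  set π := LinearMap.funLeft k k (Fin.natAddLE he) ∘ₗ mulVecLin P⁻¹
  have hπ : Function.Surjective π :=
    (LinearMap.funLeft_surjective_of_injective k k _ (Fin.natAddLE_injective he)).comp
      (mulVec_surjective_iff_isUnit.mpr (isUnit_nonsing_inv_iff.mpr hP))
  have hcomap : (⨅ D ∈ s, LinearMap.ker (mulVecLin (F D))) =
      (⨅ D ∈ s, LinearMap.ker
        (mulVecLin ((E D).submatrix id (Fin.natAddLE he)))).comap π := by
    ext v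
    simp only [Submodule.mem_iInf, Submodule.mem_comap, LinearMap.mem_ker, mulVecLin_apply]
    refine forall₂_congr fun D hD => ?_
    have hv := mulVec_mulVec_eq_of_cols_eq_zero he hP (hconj D hD ▸ hcols D hD) (P⁻¹ *ᵥ v)
    rw [mulVec_mulVec _ P, mul_nonsing_inv _ ((isUnit_iff_isUnit_det P).mp hP), one_mulVec] at hv
    rw [hv, (mulVec_injective_iff_isUnit.mpr hP).eq_iff' (mulVec_zero P), hconj D hD]
    rfl
  have hker : finrank k ↥(LinearMap.ker π) = e := by
    have := π.finrank_range_add_finrank_ker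
    rw [LinearMap.range_eq_top.mpr hπ, finrank_top, finrank_fin_fun, finrank_fin_fun] at this
    omega
  rw [hcomap, Submodule.finrank_comap_eq_finrank_add_finrank_ker hπ, hker, add_comm]

theorem Matrix.finrank_iInf_ker_map_eq_add {R k : Type*} [CommRing R] [Field k] (φ : R →+* k)
    {e r : ℕ} (he : e ≤ r) (G : Set (Matrix (Fin r) (Fin r) R)) {Q : Matrix (Fin r) (Fin r) R}
    (hQ : IsUnit Q) (hcols : ∀ D ∈ G, ∀ i j : Fin r, (j : ℕ) < e → (Q⁻¹ * D * Q) i j = 0) :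
    finrank k ↥(⨅ D ∈ G, LinearMap.ker (mulVecLin (D.map φ))) =
      e + finrank k ↥(⨅ D ∈ G, LinearMap.ker
        (mulVecLin (((Q⁻¹ * D * Q).submatrix id (Fin.natAddLE he)).map φ))) := by
  have hinv : (Q.map φ)⁻¹ = Q⁻¹.map φ := inv_eq_left_inv <| by
    rw [← Matrix.map_mul, nonsing_inv_mul _ ((isUnit_iff_isUnit_det Q).mp hQ),
      Matrix.map_one _ φ.map_zero φ.map_one]
  have hconj : ∀ D : Matrix (Fin r) (Fin r) R,
      (Q.map φ)⁻¹ * D.map φ * Q.map φ = (Q⁻¹ * D * Q).map φ := fun D => by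
    rw [hinv, Matrix.map_mul, Matrix.map_mul]
  exact finrank_iInf_ker_eq_add he G (·.map φ) (fun D => (Q⁻¹ * D * Q).map φ)
    (hQ.map φ.mapMatrix) (fun D _ => hconj D) fun D hD i j hj => by
      rw [map_apply, hcols D hD i j hj, map_zero]

theorem Submodule.exists_fin_iInf_eq {R M ι : Type*} [Ring R] [AddCommGroup M] [Module R M]
    [IsArtinian R M] (W : ι → Submodule R M) :
    ∃ (m : ℕ) (f : Fin m → ι), ⨅ t, W (f t) = ⨅ i, W i := by
  classical
  obtain ⟨_, ⟨s, rfl⟩, hmin⟩ := IsArtinian.set_has_minimal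
    (Set.range fun s : Finset ι => ⨅ i ∈ s, W i) ⟨_, ∅, rfl⟩
  have hs : ⨅ i ∈ s, W i = ⨅ i, W i := by
    refine le_antisymm (le_iInf fun i => ?_) (le_iInf₂ fun i _ => iInf_le W i)
    by_contra h
    exact hmin _ ⟨insert i s, rfl⟩ (by simpa only [Finset.iInf_insert] using inf_lt_right.mpr h)
  refine ⟨s.card, fun t => s.equivFin.symm t, ?_⟩
  rw [← hs, ← Finset.iInf_coe, iInf_subtype']
  exact Equiv.iInf_comp (g := fun i : s => W i) s.equivFin.symm

theorem Matrix.exists_mul_eq_one_of_injective_mulVec {k m n : Type*} [Field k] [Fintype m]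
    [DecidableEq m] [Fintype n] [DecidableEq n] {A : Matrix m n k}
    (hA : Function.Injective A.mulVec) : ∃ B : Matrix n m k, B * A = 1 := by
  obtain ⟨g, hg⟩ := (mulVecLin A).exists_leftInverse_of_injective (LinearMap.ker_eq_bot.mpr hA)
  refine ⟨LinearMap.toMatrix' g, ?_⟩
  rw [← LinearMap.toMatrix'_toLin' A, ← LinearMap.toMatrix'_comp]
  exact (congrArg LinearMap.toMatrix' hg).trans LinearMap.toMatrix'_id

end Field

def ReflectsDvd {R ι κ n : Type*} [CommRing R] [Fintype n] (ϖ : R) (s : Set ι)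
    (T : ι → Matrix κ n R) : Prop :=
  ∀ v : n → R, (∀ i ∈ s, ∃ w, T i *ᵥ v = ϖ • w) → ∃ v', v = ϖ • v'

theorem reflectsDvd_of_isUnit_sum_mul {R ι κ n : Type*} [CommRing R] [Fintype ι] [Fintype κ]
    [Fintype n] [DecidableEq n] (ϖ : R) {C : ι → Matrix n κ R} {A : ι → Matrix κ n R}
    (hS : IsUnit (∑ t, C t * A t)) : ReflectsDvd ϖ Set.univ A := by
  intro v hv
  choose w hw using fun t => hv t (Set.mem_univ t)
  set S := ∑ t, C t * A t
  refine ⟨S⁻¹ *ᵥ ∑ t, C t *ᵥ w t, ?_⟩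
  calc v = S⁻¹ *ᵥ (S *ᵥ v) := by
        rw [mulVec_mulVec, nonsing_inv_mul _ ((isUnit_iff_isUnit_det S).mp hS), one_mulVec]
    _ = ϖ • S⁻¹ *ᵥ ∑ t, C t *ᵥ w t := by
        simp only [S, sum_mulVec, ← mulVec_mulVec, hw, mulVec_smul, ← Finset.smul_sum]

section LocalRing

variable {O : Type*} [CommRing O] [IsLocalRing O]

theorem Matrix.isUnit_of_isUnit_map_residue {n : Type*} [Fintype n] [DecidableEq n]
    {S : Matrix n n O} (hS : IsUnit (S.map (residue O))) : IsUnit S := by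
  rw [isUnit_iff_isUnit_det] at hS ⊢
  rw [← RingHom.mapMatrix_apply, ← RingHom.map_det] at hS
  exact (isUnit_map_iff (residue O) _).mp hS

theorem exists_eq_smul_of_residue_eq_zero {ϖ : O} (hmax : maximalIdeal O = Ideal.span {ϖ})
    {n : Type*} {v : n → O} (hv : residue O ∘ v = 0) : ∃ w, v = ϖ • w := by
  have h : ∀ i, ϖ ∣ v i := fun i => by
    rw [← Ideal.mem_span_singleton, ← hmax, ← residue_eq_zero_iff]
    exact congrFun hv i
  choose w hw using h
  exact ⟨w, funext hw⟩

theorem residue_comp_smul_eq_zero {ϖ : O} (hmax : maximalIdeal O = Ideal.span {ϖ}) {n : Type*}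
    (w : n → O) : residue O ∘ (ϖ • w) = 0 := by
  have hϖ : residue O ϖ = 0 := by
    rw [residue_eq_zero_iff, hmax]
    exact Ideal.mem_span_singleton_self ϖ
  ext i
  simp [hϖ]

variable {ι κ n : Type*} [Fintype n]

theorem iInf_ker_map_residue_eq_bot_of_reflectsDvd {ϖ : O}
    (hmax : maximalIdeal O = Ideal.span {ϖ}) {s : Set ι} {T : ι → Matrix κ n O}
    (hT : ReflectsDvd ϖ s T) :
    ⨅ i ∈ s, LinearMap.ker (mulVecLin ((T i).map (residue O))) = ⊥ := by
  rw [Submodule.eq_bot_iff]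
  intro v hv
  simp only [Submodule.mem_iInf, LinearMap.mem_ker, mulVecLin_apply] at hv
  obtain ⟨u, rfl⟩ := residue_surjective.comp_left v
  have hdvd : ∀ i ∈ s, ∃ w, T i *ᵥ u = ϖ • w := fun i hi =>
    exists_eq_smul_of_residue_eq_zero hmax
      (by ext; simpa [RingHom.map_mulVec] using congrFun (hv i hi) _)
  obtain ⟨v', rfl⟩ := hT u hdvd
  exact residue_comp_smul_eq_zero hmax v'

theorem exists_isUnit_sum_mul_of_iInf_ker_eq_bot [Fintype κ] [DecidableEq κ] [DecidableEq n]
    (s : Set ι) (T : ι → Matrix κ n O)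
    (hT : ⨅ i ∈ s, LinearMap.ker (mulVecLin ((T i).map (residue O))) = ⊥) :
    ∃ (m : ℕ) (f : Fin m → ι) (_ : ∀ t, f t ∈ s) (C : Fin m → Matrix n κ O),
      IsUnit (∑ t, C t * T (f t)) := by
  obtain ⟨m, f, hf⟩ :=
    Submodule.exists_fin_iInf_eq fun i : s => LinearMap.ker (mulVecLin ((T i).map (residue O)))
  set A : Matrix (Fin m × κ) n O := Matrix.of fun q => T (f q.1) q.2
  have hA : Function.Injective (A.map (residue O)).mulVec := by
    refine (LinearMap.ker_eq_bot (f := mulVecLin (A.map (residue O)))).mp (eq_bot_iff.mpr ?_)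
    rw [← hT, iInf_subtype', ← hf]
    intro v hv
    simp only [Submodule.mem_iInf, LinearMap.mem_ker, mulVecLin_apply] at hv ⊢
    intro t
    ext b
    exact congrFun hv (t, b)
  obtain ⟨B, hB⟩ := exists_mul_eq_one_of_injective_mulVec hA
  set C := B.map (Function.surjInv (residue_surjective (R := O)))
  have hC : C.map (residue O) = B := by ext; simp [C, Function.surjInv_eq]
  refine ⟨m, fun t => f t, fun t => (f t).2, fun t => Matrix.of fun a c => C a (t, c), ?_⟩
  have hsum : ∑ t, Matrix.of (fun a c => C a (t, c)) * T (f t) = C * A := by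
    ext a b
    simp [Matrix.mul_apply, Fintype.sum_prod_type, A, Matrix.sum_apply]
  rw [hsum]
  apply isUnit_of_isUnit_map_residue
  rw [Matrix.map_mul, hC, hB]
  exact isUnit_one

end LocalRing

section PID

theorem Function.Embedding.exists_perm_mem_range_iff {n r : ℕ} (f : Fin n ↪ Fin r) :
    ∃ σ : Equiv.Perm (Fin r), ∀ j, σ j ∈ Set.range f ↔ (j : ℕ) < n := by
  have hn : n ≤ r := by simpa using Fintype.card_le_of_embedding f
  set τ := (Fin.castLEOrderIso hn).toEquiv.symm.trans (Equiv.ofInjective f f.injective)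
  refine ⟨τ.extendSubtype, fun j => ⟨fun h => ?_, τ.extendSubtype_mem j⟩⟩
  by_contra hj
  exact τ.extendSubtype_not_mem j hj h

variable {R : Type*} [CommRing R] [IsDomain R] [IsPrincipalIdealRing R]

theorem Submodule.exists_basis_mem_iff_of_smul_mem {M : Type*} [AddCommGroup M] [Module R M]
    {r : ℕ} (b₀ : Basis (Fin r) R M) (N : Submodule R M)
    (hN : ∀ (c : R) (x : M), c ≠ 0 → c • x ∈ N → x ∈ N) :
    ∃ (e : ℕ) (b : Basis (Fin r) R M), e ≤ r ∧ finrank R N = e ∧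
      ∀ x, x ∈ N ↔ ∀ j : Fin r, e ≤ (j : ℕ) → b.repr x j = 0 := by
  obtain ⟨n, snf⟩ := N.smithNormalForm b₀
  -- By saturation the Smith basis vectors `bM (f i)` lie in `N`, not only their multiples.
  have hbM : ∀ i, snf.bM (snf.f i) ∈ N := fun i => by
    have ha : snf.a i ≠ 0 := fun ha => snf.bN.ne_zero i (Subtype.ext (by simp [snf.snf, ha]))
    exact hN _ _ ha (snf.snf i ▸ (snf.bN i).2)
  have hmem : ∀ x, x ∈ N ↔ ∀ j ∉ Set.range snf.f, snf.bM.repr x j = 0 := fun x =>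
    ⟨fun hx _ hj => snf.repr_eq_zero_of_notMem_range ⟨x, hx⟩ hj, fun h => by
      rw [← snf.bM.sum_repr x]
      refine N.sum_mem fun j _ => ?_
      by_cases hj : j ∈ Set.range snf.f
      · obtain ⟨i, rfl⟩ := hj
        exact N.smul_mem _ (hbM i)
      · simp [h j hj]⟩
  obtain ⟨σ, hσ⟩ := snf.f.exists_perm_mem_range_iff
  refine ⟨n, snf.bM.reindex σ.symm, by simpa using Fintype.card_le_of_embedding snf.f,
    by simp [finrank_eq_card_basis snf.bN], fun x => ?_⟩
  simp only [hmem, Basis.repr_reindex_apply, Equiv.symm_symm]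
  rw [← σ.forall_congr_right]
  simp only [hσ, not_lt]

theorem Matrix.exists_isUnit_mem_iInf_ker_iff {r : ℕ} (G : Set (Matrix (Fin r) (Fin r) R)) :
    ∃ (e : ℕ) (he : e ≤ r) (Q : Matrix (Fin r) (Fin r) R), IsUnit Q ∧
      finrank R ↥(⨅ D ∈ G, LinearMap.ker (mulVecLin D)) = e ∧
      ∀ x, x ∈ ⨅ D ∈ G, LinearMap.ker (mulVecLin D) ↔ (Q⁻¹ *ᵥ x) ∘ Fin.natAddLE he = 0 := by
  have hsat : ∀ (c : R) (x : Fin r → R), c ≠ 0 → c • x ∈ ⨅ D ∈ G, LinearMap.ker (mulVecLin D) →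
      x ∈ ⨅ D ∈ G, LinearMap.ker (mulVecLin D) := fun c x hc hx => by
    simp only [Submodule.mem_iInf, LinearMap.mem_ker, mulVecLin_apply, mulVec_smul] at hx ⊢
    exact fun D hD => (smul_eq_zero.mp (hx D hD)).resolve_left hc
  obtain ⟨e, b, he, hrank, hmem⟩ :=
    Submodule.exists_basis_mem_iff_of_smul_mem (Pi.basisFun R (Fin r)) _ hsat
  have hQ : b.toMatrix (Pi.basisFun R (Fin r)) * (Pi.basisFun R (Fin r)).toMatrix b = 1 :=
    Basis.toMatrix_mul_toMatrix_flip _ _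
  refine ⟨e, he, (Pi.basisFun R (Fin r)).toMatrix b,
    (isUnit_iff_isUnit_det _).mpr (isUnit_det_of_left_inverse hQ), hrank, fun x => ?_⟩
  have hrepr := (Pi.basisFun R (Fin r)).toMatrix_mulVec_repr b x
  rw [show ⇑((Pi.basisFun R (Fin r)).repr x) = x by ext; simp] at hrepr
  rw [hmem, inv_eq_left_inv hQ, Fin.comp_natAddLE_eq_zero_iff, hrepr]

end PID

section Conjugate

variable {R : Type*} [CommRing R] {e r : ℕ} (he : e ≤ r) {G : Set (Matrix (Fin r) (Fin r) R)}
  {Q : Matrix (Fin r) (Fin r) R}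

theorem Matrix.conj_apply_eq_zero_of_mem_iInf_ker_iff (hQ : IsUnit Q)
    (hN : ∀ x, x ∈ ⨅ D ∈ G, LinearMap.ker (mulVecLin D) ↔ (Q⁻¹ *ᵥ x) ∘ Fin.natAddLE he = 0) :
    ∀ D ∈ G, ∀ i j : Fin r, (j : ℕ) < e → (Q⁻¹ * D * Q) i j = 0 := by
  intro D hD i j hj
  have hmem : Q *ᵥ Pi.single j 1 ∈ ⨅ D ∈ G, LinearMap.ker (mulVecLin D) := by
    rw [hN, mulVec_mulVec, nonsing_inv_mul _ ((isUnit_iff_isUnit_det Q).mp hQ), one_mulVec]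
    ext l
    exact Pi.single_eq_of_ne (fun h => by simp [← h, Fin.natAddLE] at hj) 1
  simp only [Submodule.mem_iInf, LinearMap.mem_ker, mulVecLin_apply] at hmem
  have hcol : (Q⁻¹ * D * Q) *ᵥ Pi.single j 1 = 0 := by
    rw [← mulVec_mulVec, ← mulVec_mulVec, hmem D hD, mulVec_zero]
  simpa using congrFun hcol i

theorem reflectsDvd_of_forall_exists_mulVec_eq {ϖ : R} (hQ : IsUnit Q)
    (hN : ∀ x, x ∈ ⨅ D ∈ G, LinearMap.ker (mulVecLin D) ↔ (Q⁻¹ *ᵥ x) ∘ Fin.natAddLE he = 0)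
    (hcols : ∀ D ∈ G, ∀ i j : Fin r, (j : ℕ) < e → (Q⁻¹ * D * Q) i j = 0)
    (h : ∀ (x : Fin r → R) (y : Matrix (Fin r) (Fin r) R → (Fin r → R)),
      (∀ D ∈ G, D *ᵥ x = ϖ • y D) → ∃ x', ∀ D ∈ G, D *ᵥ x' = y D) :
    ReflectsDvd ϖ G fun D => (Q⁻¹ * D * Q).submatrix id (Fin.natAddLE he) := by
  intro v hv
  choose! w hw using hv
  set c := Function.extend (Fin.natAddLE he) v 0
  have hc : c ∘ Fin.natAddLE he = v := Function.extend_comp (Fin.natAddLE_injective he) v 0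
  obtain ⟨x', hx'⟩ := h (Q *ᵥ c) (fun D => Q *ᵥ w D) fun D hD => by
    rw [mulVec_mulVec_eq_of_cols_eq_zero he hQ (hcols D hD), hc, hw D hD, mulVec_smul]
  have hmem : Q *ᵥ c - ϖ • x' ∈ ⨅ D ∈ G, LinearMap.ker (mulVecLin D) := by
    simp only [Submodule.mem_iInf, LinearMap.mem_ker, mulVecLin_apply]
    intro D hD
    rw [mulVec_sub, mulVec_smul, hx' D hD, mulVec_mulVec_eq_of_cols_eq_zero he hQ (hcols D hD),
      hc, hw D hD, mulVec_smul, sub_self]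
  refine ⟨(Q⁻¹ *ᵥ x') ∘ Fin.natAddLE he, ?_⟩
  rw [hN, mulVec_sub, mulVec_mulVec, nonsing_inv_mul _ ((isUnit_iff_isUnit_det Q).mp hQ),
    one_mulVec, mulVec_smul] at hmem
  rw [← hc, ← sub_eq_zero]
  exact hmem

theorem forall_exists_mulVec_eq_of_reflectsDvd [IsDomain R] {ϖ : R} (hϖ : ϖ ≠ 0) (hQ : IsUnit Q)
    (hcols : ∀ D ∈ G, ∀ i j : Fin r, (j : ℕ) < e → (Q⁻¹ * D * Q) i j = 0)
    (hT : ReflectsDvd ϖ G fun D => (Q⁻¹ * D * Q).submatrix id (Fin.natAddLE he)) :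
    ∀ (x : Fin r → R) (y : Matrix (Fin r) (Fin r) R → (Fin r → R)),
      (∀ D ∈ G, D *ᵥ x = ϖ • y D) → ∃ x', ∀ D ∈ G, D *ᵥ x' = y D := by
  intro x y hxy
  have hx : x = Q *ᵥ (Q⁻¹ *ᵥ x) := by
    rw [mulVec_mulVec, mul_nonsing_inv _ ((isUnit_iff_isUnit_det Q).mp hQ), one_mulVec]
  obtain ⟨v, hv⟩ := hT ((Q⁻¹ *ᵥ x) ∘ Fin.natAddLE he) fun D hD => ⟨Q⁻¹ *ᵥ y D, by
    have hD' := hxy D hD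
    rw [hx, mulVec_mulVec_eq_of_cols_eq_zero he hQ (hcols D hD)] at hD'
    rw [← mulVec_smul, ← hD', mulVec_mulVec,
      nonsing_inv_mul _ ((isUnit_iff_isUnit_det Q).mp hQ), one_mulVec]⟩
  refine ⟨Q *ᵥ Function.extend (Fin.natAddLE he) v 0, fun D hD => smul_right_injective _ hϖ ?_⟩
  beta_reduce
  rw [← hxy D hD, hx, ← mulVec_smul, ← mulVec_smul,
    mulVec_mulVec_eq_of_cols_eq_zero he hQ (hcols D hD),
    mulVec_mulVec_eq_of_cols_eq_zero he hQ (hcols D hD)]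
  exact congrArg (Q *ᵥ _ *ᵥ ·)
    ((congrArg (ϖ • ·) (Function.extend_comp (Fin.natAddLE_injective he) v 0)).trans hv.symm)

theorem reflectsDvd_of_isUnit_sum_blocks (ϖ : R) {m : ℕ} {Ds : Fin m → Matrix (Fin r) (Fin r) R}
    (hDs : ∀ t, Ds t ∈ G) {Chat : Fin m → Matrix (Fin (r - e)) (Fin e) R}
    {Ctil : Fin m → Matrix (Fin (r - e)) (Fin (r - e)) R}
    (hS : IsUnit (∑ t, (Chat t * (Q⁻¹ * Ds t * Q).submatrix (Fin.castLE he) (Fin.natAddLE he)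
      + Ctil t * (Q⁻¹ * Ds t * Q).submatrix (Fin.natAddLE he) (Fin.natAddLE he)))) :
    ReflectsDvd ϖ G fun D => (Q⁻¹ * D * Q).submatrix id (Fin.natAddLE he) := by
  intro v hv
  simp_rw [← fromCols_mul_fromRows] at hS
  refine reflectsDvd_of_isUnit_sum_mul ϖ hS v fun t _ => ?_
  obtain ⟨w, hw⟩ := hv (Ds t) (hDs t)
  refine ⟨Sum.elim (w ∘ Fin.castLE he) (w ∘ Fin.natAddLE he), ?_⟩
  rw [fromRows_mulVec]
  ext (i | i)
  · exact congrFun hw (Fin.castLE he i)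
  · exact congrFun hw (Fin.natAddLE he i)

end Conjugate

/-- equivalence of the three conditions of Theorem `ufix_ex`, part I. -/
theorem ufix_ex_part_I
    (p : ℕ)
    (O : Type) [CommRing O] [IsDomain O] [IsDiscreteValuationRing O]
    (hmax : IsLocalRing.maximalIdeal O = Ideal.span {(p : O)})
    (r : ℕ) (G : Set (Matrix (Fin r) (Fin r) O)) :
    -- (i)
    List.TFAE [
      Module.finrank O
          ↥(⨅ D ∈ G, LinearMap.ker (Matrix.mulVecLin D)) =
        Module.finrank (IsLocalRing.ResidueField O)
          ↥(⨅ D ∈ G, LinearMap.ker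
              (Matrix.mulVecLin (D.map (IsLocalRing.residue O)))),
      -- (ii)
      ∀ (x : Fin r → O) (y : Matrix (Fin r) (Fin r) O → (Fin r → O)),
        (∀ D ∈ G, D.mulVec x = (p : O) • y D) →
        ∃ x' : Fin r → O, ∀ D ∈ G, D.mulVec x' = y D,
      -- (iii)
      ∃ (e : ℕ) (he : e ≤ r) (Q : Matrix (Fin r) (Fin r) O), IsUnit Q ∧
        (∀ D ∈ G, ∀ (i j : Fin r), (j : ℕ) < e → (Q⁻¹ * D * Q) i j = 0) ∧
        ∃ (m : ℕ) (Ds : Fin m → Matrix (Fin r) (Fin r) O) (_ : ∀ t : Fin m, Ds t ∈ G)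
          (Chat : Fin m → Matrix (Fin (r - e)) (Fin e) O)
          (Ctil : Fin m → Matrix (Fin (r - e)) (Fin (r - e)) O),
          IsUnit (∑ t : Fin m,
            (Chat t * ((Q⁻¹ * Ds t * Q).submatrix
                (fun i : Fin e => Fin.castLE he i)
                (fun j : Fin (r - e) => (⟨e + (j : ℕ), by omega⟩ : Fin r)))
            + Ctil t * ((Q⁻¹ * Ds t * Q).submatrix
                (fun i : Fin (r - e) => (⟨e + (i : ℕ), by omega⟩ : Fin r))
                (fun j : Fin (r - e) => (⟨e + (j : ℕ), by omega⟩ : Fin r))))) ] := by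
  have hp : (p : O) ≠ 0 := fun h =>
    IsDiscreteValuationRing.not_a_field O (hmax.trans (Ideal.span_singleton_eq_bot.mpr h))
  obtain ⟨e, he, Q, hQ, hrank, hN⟩ := exists_isUnit_mem_iInf_ker_iff G
  have hcols := conj_apply_eq_zero_of_mem_iInf_ker_iff he hQ hN
  have hK : finrank O ↥(⨅ D ∈ G, LinearMap.ker (mulVecLin D)) =
        finrank (ResidueField O) ↥(⨅ D ∈ G, LinearMap.ker (mulVecLin (D.map (residue O)))) ↔
      ⨅ D ∈ G, LinearMap.ker
        (mulVecLin (((Q⁻¹ * D * Q).submatrix id (Fin.natAddLE he)).map (residue O))) = ⊥ := by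
    rw [hrank, finrank_iInf_ker_map_eq_add (residue O) he G hQ hcols, left_eq_add,
      Submodule.finrank_eq_zero]
  tfae_have 1 → 3 := fun h => by
    obtain ⟨m, Ds, hDs, C, hC⟩ := exists_isUnit_sum_mul_of_iInf_ker_eq_bot G _ (hK.mp h)
    refine ⟨e, he, Q, hQ, hcols, m, Ds, hDs, fun t => (C t).submatrix id (Fin.castLE he),
      fun t => (C t).submatrix id (Fin.natAddLE he), ?_⟩
    rw [Finset.sum_congr rfl fun t _ => mul_eq_add_mul_submatrix_castLE_natAddLE he (C t) _] at hC
    exact hC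
  tfae_have 3 → 2 := by
    rintro ⟨e', he', Q', hQ', hcols', m, Ds, hDs, Chat, Ctil, hS⟩
    exact forall_exists_mulVec_eq_of_reflectsDvd he' hp hQ' hcols'
      (reflectsDvd_of_isUnit_sum_blocks he' _ hDs hS)
  tfae_have 2 → 1 := fun h => hK.mpr <| iInf_ker_map_residue_eq_bot_of_reflectsDvd hmax <|
    reflectsDvd_of_forall_exists_mulVec_eq he hQ hN hcols h
  tfae_finish
end

section
/- Let Ξ be a map from the set of prime numbers to M_d(ℤ) such that any two matrices in its image commute, and let λ_Ξ be the associated d-tuple of power series over ℚ. Then for every prime p, the d-tuple of power series p·λ_Ξ(x_1,…,x_d) − Ξ(p)·λ_Ξ(x_1^p,…,x_d^p) is equal to Σ_{m≥1, gcd(m,p)=1} (p/m)·A_m·(x_1^m,…,x_d^m)^T; in particular, every coefficient of this d-tuple is a rational number of p-adic valuation at least 1 (i.e. lies in p·ℤ_(p)). -/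
/-!
Since the `Ξ(q)` commute, `A_m` is a product in a commutative monoid, so `A_{pk} = Ξ(p) A_k`.
Both `λ_Ξ` and `λ_Ξ(x^p)` only have coefficients at pure powers `x_i^m`, and at `x_i^{pk}` the
coefficient of `Ξ(p) λ_Ξ(x^p)` is `(Ξ(p) A_k)/k = A_{pk}/k`, which is exactly the coefficient
`p A_{pk}/(pk)` of `p λ_Ξ`; so only the exponents prime to `p` survive.
-/

open MvPowerSeries

section FactorizationNoncommProd

open scoped IsMulCommutative

variable {M : Type*} [Monoid M] (f : ℕ → M) (hf : ∀ p q : ℕ, p.Prime → q.Prime → Commute (f p) (f q))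

def factorizationNoncommProd (n : ℕ) : M :=
  n.factorization.support.noncommProd (fun q => f q ^ n.factorization q)
    (fun q hq q' hq' _ => Commute.pow_pow
      (hf q q' (Nat.prime_of_mem_primeFactors hq) (Nat.prime_of_mem_primeFactors hq')) _ _)

theorem factorizationNoncommProd_prime {p : ℕ} (hp : p.Prime) :
    factorizationNoncommProd f hf p = f p := by
  simp [factorizationNoncommProd, hp.factorization]

theorem factorizationNoncommProd_mul {a b : ℕ} (ha : a ≠ 0) (hb : b ≠ 0) :
    factorizationNoncommProd f hf (a * b) =
      factorizationNoncommProd f hf a * factorizationNoncommProd f hf b := by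
  -- compute in the commutative submonoid generated by the `f q`, where it is `Finsupp.prod`
  let S := Submonoid.closure (f '' {p | p.Prime})
  have : IsMulCommutative S := Submonoid.isMulCommutative_closure _ <| by
    rintro _ ⟨p, hp, rfl⟩ _ ⟨q, hq, rfl⟩
    exact hf p q hp hq
  let g : ℕ → S := fun q =>
    if hq : q.Prime then ⟨f q, Submonoid.subset_closure ⟨q, hq, rfl⟩⟩ else 1
  have hprod : ∀ n, factorizationNoncommProd f hf n =
      S.subtype (n.factorization.prod fun q k => g q ^ k) := by
    intro n
    refine (Finset.noncommProd_congr rfl (fun q hq => ?_) _).trans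
      ((Finset.map_noncommProd _ _ _ S.subtype).symm.trans
        (congrArg S.subtype (Finset.noncommProd_eq_prod _ _)))
    simp [g, Nat.prime_of_mem_primeFactors hq]
  rw [hprod, hprod, hprod, Nat.factorization_mul ha hb,
    Finsupp.prod_add_index' (fun _ => pow_zero _) (fun _ => pow_add _), map_mul]

end FactorizationNoncommProd

section PurePowerSeries

variable {σ R : Type*} [Fintype σ] [DecidableEq σ] [Semiring R]

/-- The series `∑_{i, m ≥ 1} c i m • X i ^ m`. -/
noncomputable def purePowerSeries : (σ → ℕ → R) →ₗ[R] MvPowerSeries σ R where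
  toFun c e := ∑ i, if e = Finsupp.single i (e i) ∧ e i ≠ 0 then c i (e i) else 0
  map_add' c c' := by
    funext e
    exact (Finset.sum_congr rfl fun i _ => ite_add_zero).trans Finset.sum_add_distrib
  map_smul' r c := by
    funext e
    show _ = r • ∑ i : σ, (_ : R)
    simp only [Finset.smul_sum, smul_ite, smul_zero, Pi.smul_apply]

theorem purePowerSeries_apply (c : σ → ℕ → R) (e : σ →₀ ℕ) :
    purePowerSeries c e = ∑ i, if e = Finsupp.single i (e i) ∧ e i ≠ 0 then c i (e i) else 0 :=
  rfl

theorem coeff_purePowerSeries_single (c : σ → ℕ → R) (i : σ) {m : ℕ} (hm : m ≠ 0) :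
    coeff (Finsupp.single i m) (purePowerSeries c) = c i m := by
  rw [coeff_apply]
  refine (Finset.sum_eq_single i (fun j _ hji => if_neg ?_) (by simp)).trans (by simp [hm])
  rw [Finsupp.single_eq_of_ne hji]
  exact fun h => h.2 rfl

theorem coeff_purePowerSeries_of_ne_single (c : σ → ℕ → R) {e : σ →₀ ℕ}
    (he : ∀ i, ∀ m ≠ 0, e ≠ Finsupp.single i m) : coeff e (purePowerSeries c) = 0 :=
  Finset.sum_eq_zero fun i _ => if_neg fun h => he i _ h.2 h.1

theorem eq_purePowerSeries_of_coeff {f : MvPowerSeries σ R} {c : σ → ℕ → R}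
    (hsingle : ∀ i, ∀ m ≠ 0, coeff (Finsupp.single i m) f = c i m)
    (hzero : ∀ e, (∀ i, ∀ m ≠ 0, e ≠ Finsupp.single i m) → coeff e f = 0) :
    f = purePowerSeries c := by
  ext e
  by_cases he : ∃ i, ∃ m ≠ 0, e = Finsupp.single i m
  · obtain ⟨i, m, hm, rfl⟩ := he
    rw [hsingle i m hm, coeff_purePowerSeries_single c i hm]
  · push Not at he
    rw [hzero e he, coeff_purePowerSeries_of_ne_single c he]

theorem purePowerSeries_congr {c c' : σ → ℕ → R} (h : ∀ i, ∀ m ≠ 0, c i m = c' i m) :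
    purePowerSeries c = purePowerSeries c' :=
  eq_purePowerSeries_of_coeff (fun i m hm => (coeff_purePowerSeries_single c i hm).trans (h i m hm))
    (fun _ he => coeff_purePowerSeries_of_ne_single c he)

theorem coeff_purePowerSeries_induction {P : R → Prop} {c : σ → ℕ → R} (h0 : P 0)
    (hc : ∀ i, ∀ m ≠ 0, P (c i m)) (e : σ →₀ ℕ) : P (coeff e (purePowerSeries c)) := by
  by_cases he : ∃ i, ∃ m ≠ 0, e = Finsupp.single i m
  · obtain ⟨i, m, hm, rfl⟩ := he
    rw [coeff_purePowerSeries_single c i hm]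
    exact hc i m hm
  · push Not at he
    rwa [coeff_purePowerSeries_of_ne_single c he]

end PurePowerSeries

theorem Finsupp.eq_smul_mapRange_div {σ : Type*} {p : ℕ} {e : σ →₀ ℕ}
    (hdvd : ∀ i ∈ e.support, p ∣ e i) : e = p • e.mapRange (· / p) (Nat.zero_div p) := by
  ext i
  by_cases hi : i ∈ e.support
  · simp [Nat.mul_div_cancel' (hdvd i hi)]
  · simp [Finsupp.notMem_support_iff.mp hi]

section Expand

variable {σ R : Type*} [CommRing R] {p : ℕ} (hp : p ≠ 0)

theorem MvPowerSeries.coeff_expand (φ : MvPowerSeries σ R) (e : σ →₀ ℕ) :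
    coeff e (expand p hp φ) =
      if ∀ i ∈ e.support, p ∣ e i then coeff (e.mapRange (· / p) (Nat.zero_div p)) φ else 0 := by
  split_ifs with hdvd
  · conv_lhs => rw [Finsupp.eq_smul_mapRange_div hdvd]
    exact coeff_expand_smul p hp φ _
  · push Not at hdvd
    obtain ⟨i, -, hi⟩ := hdvd
    exact coeff_expand_of_not_dvd p hp φ hi

variable [Fintype σ] [DecidableEq σ]

theorem expand_purePowerSeries (c : σ → ℕ → R) :
    expand p hp (purePowerSeries c) =
      purePowerSeries fun i m => if p ∣ m then c i (m / p) else 0 := by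
  refine eq_purePowerSeries_of_coeff (fun i m hm => ?_) (fun e he => ?_)
  · split_ifs with hpm
    · obtain ⟨k, rfl⟩ := hpm
      rw [← smul_eq_mul, ← Finsupp.smul_single, coeff_expand_smul, smul_eq_mul,
        Nat.mul_div_cancel_left k (Nat.pos_of_ne_zero hp),
        coeff_purePowerSeries_single c i (right_ne_zero_of_mul hm)]
    · exact coeff_expand_of_not_dvd p hp _ (i := i) (by simpa using hpm)
  · rw [coeff_expand]
    split_ifs with hdvd
    · refine coeff_purePowerSeries_of_ne_single c fun i m hm hsingle => he i (p * m)
        (mul_ne_zero hp hm) ?_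
      rw [Finsupp.eq_smul_mapRange_div hdvd, hsingle, Finsupp.smul_single, smul_eq_mul]
    · rfl

end Expand

section PType

variable {σ : Type*} [Fintype σ] [DecidableEq σ]

theorem smul_purePowerSeries_sub_expand {p : ℕ} (hp : p.Prime) (P : Matrix σ σ ℤ)
    (B : ℕ → Matrix σ σ ℤ) (hB : ∀ k ≠ 0, B (p * k) = P * B k) (l : σ) :
    (p : ℚ) • purePowerSeries (fun i m => (B m l i : ℚ) / m) -
        ∑ l', (P l l' : ℚ) • expand p hp.ne_zero (purePowerSeries fun i m => (B m l' i : ℚ) / m) =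
      purePowerSeries fun i m => if ¬p ∣ m then p * (B m l i : ℚ) / m else 0 := by
  simp only [expand_purePowerSeries, ← map_smul, ← map_sum, ← map_sub]
  refine purePowerSeries_congr fun i m hm => ?_
  simp only [Pi.sub_apply, Pi.smul_apply, Finset.sum_apply, smul_eq_mul]
  split_ifs with hpm
  · obtain ⟨k, rfl⟩ := hpm
    rw [Nat.mul_div_cancel_left k hp.pos, hB k (right_ne_zero_of_mul hm), Matrix.mul_apply]
    push_cast
    rw [← mul_div_assoc, mul_div_mul_left _ _ (Nat.cast_ne_zero.mpr hp.ne_zero), Finset.sum_div]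
    simp only [mul_div_assoc, sub_self]
  · simp [mul_div_assoc]

end PType

theorem padicValRat_prime_mul_div_eq_zero_or_one_le {p m : ℕ} (hp : p.Prime) (a : ℤ)
    (hm : ¬p ∣ m) : (p * a / m : ℚ) = 0 ∨ 1 ≤ padicValRat p (p * a / m) := by
  have : Fact p.Prime := ⟨hp⟩
  rcases eq_or_ne a 0 with rfl | ha
  · simp
  have hm0 : (m : ℚ) ≠ 0 := Nat.cast_ne_zero.mpr fun h => hm (h ▸ dvd_zero p)
  have hp0 : (p : ℚ) ≠ 0 := Nat.cast_ne_zero.mpr hp.ne_zero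
  have ha0 : (a : ℚ) ≠ 0 := Int.cast_ne_zero.mpr ha
  right
  rw [padicValRat.div (mul_ne_zero hp0 ha0) hm0, padicValRat.mul hp0 ha0,
    padicValRat.self hp.one_lt, padicValRat.of_int, padicValRat.of_nat,
    padicValNat.eq_zero_of_not_dvd hm]
  omega

/-- the p-type of λ_Ξ.  For every prime `p`, the series
`p·λ_Ξ(X) − Ξ(p)·λ_Ξ(X^p)` equals `Σ_{(m,p)=1} (p/m)·A_m·X^m`, and in particular all of its
coefficients are rationals of `p`-adic valuation at least `1`. -/
theorem lamXi_p_type (d : ℕ)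
    (Ξ : ℕ → Matrix (Fin d) (Fin d) ℤ)
    (hΞ : ∀ p q : ℕ, p.Prime → q.Prime → Commute (Ξ p) (Ξ q)) :
    let A : ℕ → Matrix (Fin d) (Fin d) ℤ := fun m =>
      (m.factorization.support).noncommProd (fun q => Ξ q ^ m.factorization q)
        (fun q hq q' hq' _ => Commute.pow_pow
          (hΞ q q' (Nat.prime_of_mem_primeFactors hq) (Nat.prime_of_mem_primeFactors hq')) _ _)
    let lam : Fin d → MvPowerSeries (Fin d) ℚ := fun l =>
      fun e => ∑ l' : Fin d,
        if e = Finsupp.single l' (e l') ∧ e l' ≠ 0 then ((A (e l')) l l' : ℚ) / (e l') else 0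
    ∀ p : ℕ, p.Prime →
      -- λ_Ξ with every variable replaced by its p-th power
      let lamp : Fin d → MvPowerSeries (Fin d) ℚ := fun l' =>
        fun e => if ∀ i ∈ e.support, p ∣ e i
          then lam l' (e.mapRange (· / p) (Nat.zero_div p)) else 0
      -- the left-hand side  p·λ_Ξ − Ξ(p)·λ_Ξ(X^p)
      let lhs : Fin d → MvPowerSeries (Fin d) ℚ := fun l =>
        (p : ℚ) • lam l - ∑ l' : Fin d, ((Ξ p) l l' : ℚ) • lamp l'
      -- the right-hand side  Σ_{(m,p)=1} (p/m)·A_m·X^m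
      (lhs = fun l =>
        fun e => ∑ l' : Fin d,
          if e = Finsupp.single l' (e l') ∧ e l' ≠ 0 ∧ ¬ p ∣ e l'
            then (p : ℚ) * ((A (e l')) l l' : ℚ) / (e l') else 0) ∧
      -- every coefficient has p-adic valuation at least 1
      (∀ (l : Fin d) (e : Fin d →₀ ℕ),
        MvPowerSeries.coeff e (lhs l) = 0 ∨
        1 ≤ padicValRat p (MvPowerSeries.coeff e (lhs l))) := by
  intro A lam p hp lamp lhs
  let c : Fin d → Fin d → ℕ → ℚ := fun l i m => if ¬p ∣ m then p * (A m l i : ℚ) / m else 0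
  have hA : ∀ k ≠ 0, A (p * k) = Ξ p * A k := fun k hk => by
    rw [show A = factorizationNoncommProd Ξ hΞ from rfl,
      factorizationNoncommProd_mul Ξ hΞ hp.ne_zero hk, factorizationNoncommProd_prime Ξ hΞ hp]
  have hlamp : ∀ l, lamp l = expand p hp.ne_zero (lam l) := fun l => by
    ext e
    rw [coeff_expand, coeff_apply, coeff_apply]
    dsimp only [lamp]
    -- not `rfl`: the two `if`s carry different `Decidable` instances
    split_ifs <;> rfl
  have hlhs : ∀ l, lhs l = purePowerSeries (c l) := fun l => by
    simp only [lhs, hlamp]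
    exact smul_purePowerSeries_sub_expand hp (Ξ p) A hA l
  refine ⟨funext fun l => (hlhs l).trans ?_, fun l e => ?_⟩
  · funext e
    rw [purePowerSeries_apply]
    exact Finset.sum_congr rfl fun i _ => by simp only [c, ite_and]
  · rw [hlhs l]
    refine coeff_purePowerSeries_induction (P := fun x => x = 0 ∨ 1 ≤ padicValRat p x)
      (Or.inl rfl) (fun i m _ => ?_) e
    by_cases hpm : p ∣ m
    · simp [c, hpm]
    · simpa [c, hpm] using padicValRat_prime_mul_div_eq_zero_or_one_le hp (A m l i) hpm
end

section
/- Let p₁,…,p_k be distinct primes, n = ∏_{i=1}^k (p_i−1), n_i = ∏_{j<i}(p_j−1), γ(α) = Σ_i α_i n_i for α ∈ ∏_i{0,…,p_i−2}, and let d ≥ 1 and U₁,…,U_k ∈ GL_d(ℤ) be pairwise commuting with U_i^{p_i−1} = I_d for all i. For α write U^{⟨α⟩} = U₁^{−α₁}⋯U_k^{−α_k}. Regard matrices in M_{nd}(ℤ) as n×n arrays of d×d blocks indexed by {0,…,n−1}. Let D_i = U_i ⊗ P̂_i^T − I_{nd}, where P̂_i = I_{p₁−1} ⊗ ⋯ ⊗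 I_{p_{i−1}−1} ⊗ P_{p_i−1} ⊗ I_{p_{i+1}−1} ⊗ ⋯ ⊗ I_{p_k−1} and U_i is taken as the innermost (lowest-index) Kronecker factor; thus the block of D_i at (γ(α),γ(β)) equals U_i·[β_i ≡ α_i+1 mod (p_i−1) and β_j = α_j for j ≠ i] − I_d·[α = β]. Let Q ∈ M_{nd}(ℤ) be the block matrix whose block at (γ(α),0) is U^{⟨α⟩} for γ(α) ≠ 0, whose diagonal blocks are I_d, and all other blocks 0. Then: (a) Q is invertible over ℤ; (b) for every i, the first d columns of Q^{−1}D_iQ are zero, so Q^{−1}D_iQ = [[0, D̂_i],[0, D̃_i]] with D̂_i ∈ M_{d,(n−1)d}(ℤ) and D̃_i ∈ M_{(n−1)d}(ℤ); (c) for every prime p there exist matrices Ĉ_i^{(p)} ∈ M_{(n−1)d,d}(ℤ_p) and C̃_i^{(p)} ∈ M_{(n−1)d}(ℤ_p), 1 ≤ i ≤ k, such that Σ_{i=1}^k (Ĉ_i^{(p)} D̂_i + C̃_i^{(p)} D̃_i) ∈ GL_{(n−1)d}(ℤ_p). -/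
/-!
Write `Q = 1 + N`, where `N` is the off-diagonal part of the first block column; `N² = 0`, so `Q`
is unimodular. The relation `U_i U^{⟨α + e_i⟩} = U^{⟨α⟩}` says exactly that the first block column
of `D_i Q` vanishes, which gives (b).

For (c) it suffices, since `ℤ_p` is local with residue field `𝔽_p`, to find the `C`'s over `𝔽_p`,
i.e. to show that the last `(n-1)d` columns of the stacked matrices `Q⁻¹ D_i Q` are injective
over `𝔽_p`. A vector `w` supported off the first block satisfies `Q w = w`, so `Q⁻¹ D_i Q w = 0`
becomes `D_i w = 0`, i.e. `w(α) = U_i w(α + e_i)`. As the `U_i` are invertible and the shifts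
`α ↦ α + e_i` lead from the zero block to every block, `w` vanishes on every block.
-/

open Finset Function Matrix

section CycSucc

variable {κ : Type*} [DecidableEq κ] {m : κ → ℕ}

def cycSuccAt (i : κ) (α : ∀ j, Fin (m j)) : ∀ j, Fin (m j) :=
  update α i ⟨((α i : ℕ) + 1) % m i, Nat.mod_lt _ (Nat.zero_lt_of_lt (α i).isLt)⟩

theorem eq_cycSuccAt_iff {i : κ} {α β : ∀ j, Fin (m j)} :
    β = cycSuccAt i α ↔ (∀ j, j ≠ i → β j = α j) ∧ ((α i : ℕ) + 1) % m i = β i := by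
  rw [cycSuccAt, eq_update_iff, Fin.ext_iff, and_comm, eq_comm]

theorem reflTransGen_cycSuccAt [Fintype κ] {z : ∀ j, Fin (m j)} (hz : ∀ j, (z j : ℕ) = 0)
    (α : ∀ j, Fin (m j)) : Relation.ReflTransGen (fun a b => ∃ i, cycSuccAt i a = b) z α := by
  induction h : ∑ j, (α j : ℕ) using Nat.strong_induction_on generalizing α with
  | _ n ih =>
    by_cases hα : ∀ j, (α j : ℕ) = 0
    · obtain rfl : α = z := funext fun j => Fin.ext ((hα j).trans (hz j).symm)
      exact .refl
    push Not at hα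
    obtain ⟨i, hi⟩ := hα
    set α' := update α i ⟨(α i : ℕ) - 1, by omega⟩
    have hsucc : cycSuccAt i α' = α := by
      refine (eq_cycSuccAt_iff (α := α') (β := α)).mpr
        ⟨fun j hj => (update_of_ne hj ..).symm, ?_⟩ |>.symm
      simp only [α', update_self]
      rw [Nat.sub_add_cancel (Nat.one_le_iff_ne_zero.mpr hi), Nat.mod_eq_of_lt (α i).isLt]
    have hlt : ∑ j, (α' j : ℕ) < n := h ▸ Finset.sum_lt_sum
      (fun j _ => by rcases eq_or_ne j i with rfl | hj <;> simp [α', *])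
      ⟨i, mem_univ _, by simp only [α', update_self]; omega⟩
    exact .tail (ih _ hlt α' rfl) ⟨i, hsucc⟩

end CycSucc

section PowProd

variable {κ M : Type*} [Fintype κ] [Monoid M]
  (U : κ → M) (hU : ∀ i j, Commute (U i) (U j))

def powProd (e : κ → ℕ) : M :=
  univ.noncommProd (fun i => U i ^ e i)
    (fun i _ j _ _ => (hU i j).pow_pow _ _)

variable {U}

theorem powProd_congr {e f : κ → ℕ} (h : ∀ i, U i ^ e i = U i ^ f i) :
    powProd U hU e = powProd U hU f :=
  noncommProd_congr rfl (fun i _ => h i) _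

theorem pow_mul_powProd [DecidableEq κ] (i : κ) (n : ℕ) (e : κ → ℕ) :
    U i ^ n * powProd U hU e = powProd U hU (update e i (n + e i)) := by
  have hcomm : ∀ f : κ → ℕ,
      Set.Pairwise (univ.erase i : Set κ) (Commute on fun j => U j ^ f j) :=
    fun f a _ b _ _ => (hU a b).pow_pow _ _
  calc U i ^ n * powProd U hU e
      = U i ^ n * (U i ^ e i * (univ.erase i).noncommProd _ (hcomm e)) :=
        congrArg _ (mul_noncommProd_erase _ (mem_univ i) _ _).symm
    _ = U i ^ (n + e i) * (univ.erase i).noncommProd _ (hcomm (update e i (n + e i))) := by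
        rw [← mul_assoc, ← pow_add]
        exact congrArg _ (noncommProd_congr rfl
          (fun j hj => by rw [update_of_ne (ne_of_mem_erase hj)]) _)
    _ = powProd U hU (update e i (n + e i)) := by
        have h := mul_noncommProd_erase univ (mem_univ i) (fun j => U j ^ update e i (n + e i) j)
          (fun a _ b _ _ => (hU a b).pow_pow _ _)
        rwa [update_self] at h

theorem powProd_eq_one {e : κ → ℕ} (h : ∀ i, U i ^ e i = 1) : powProd U hU e = 1 :=
  (noncommProd_eq_pow_card _ _ _ 1 fun i _ => h i).trans (one_pow _)

theorem mul_powProd_cycSuccAt [DecidableEq κ] {m : κ → ℕ} (hUm : ∀ i, U i ^ m i = 1) (i : κ)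
    (α : ∀ j, Fin (m j)) :
    U i * powProd U hU (fun j => m j - cycSuccAt i α j) = powProd U hU (fun j => m j - α j) := by
  rw [← pow_one (U i), pow_mul_powProd]
  refine powProd_congr hU fun j => ?_
  rcases eq_or_ne j i with rfl | hj
  · simp only [cycSuccAt, update_self]
    have := (α j).isLt
    rcases Nat.lt_or_ge ((α j : ℕ) + 1) (m j) with h | h
    · rw [Nat.mod_eq_of_lt h]
      congr 1
      omega
    · rw [show (α j : ℕ) + 1 = m j by omega, Nat.mod_self, Nat.sub_zero, pow_add, hUm, mul_one,
        show m j - α j = 1 by omega]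
  · simp only [cycSuccAt, update_of_ne hj]

end PowProd

theorem Fintype.sum_prod_eq_add_sum_ne {ι n M : Type*} [Fintype ι] [DecidableEq ι] [Fintype n]
    [AddCommMonoid M] (z : ι) (f : ι × n → M) :
    ∑ x, f x = ∑ b, f (z, b) + ∑ x : {a // a ≠ z} × n, f (x.1.1, x.2) := by
  rw [Fintype.sum_prod_type, Fintype.sum_eq_add_sum_subtype_ne _ z, Fintype.sum_prod_type]

namespace Matrix

section Submatrix

variable {ι n R : Type*} [Fintype ι] [DecidableEq ι] [Fintype n] [CommRing R]

theorem mul_eq_add_submatrix_ne {l o : Type*} (z : ι) (C : Matrix l (ι × n) R)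
    (B : Matrix (ι × n) o R) :
    C * B = C.submatrix id (fun b => (z, b)) * B.submatrix (fun b => (z, b)) id +
      C.submatrix id (fun x : {a // a ≠ z} × n => (x.1.1, x.2)) *
        B.submatrix (fun x : {a // a ≠ z} × n => (x.1.1, x.2)) id := by
  ext x y
  simp only [add_apply, mul_apply, submatrix_apply, id]
  exact Fintype.sum_prod_eq_add_sum_ne z _

theorem submatrix_ne_mulVec {l : Type*} (z : ι) (B : Matrix l (ι × n) R)
    (v : {a // a ≠ z} × n → R) :
    B.submatrix id (fun x : {a // a ≠ z} × n => (x.1.1, x.2)) *ᵥ v =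
      B *ᵥ fun y => if h : y.1 = z then 0 else v (⟨y.1, h⟩, y.2) := by
  ext x
  simp only [mulVec, dotProduct, Fintype.sum_prod_eq_add_sum_ne z (fun y => B x y * _)]
  simp only [dif_pos, mul_zero, Finset.sum_const_zero, zero_add]
  exact Finset.sum_congr rfl fun y _ => by rw [dif_neg y.1.2]; rfl

end Submatrix

section BlockShift

variable {ι n R : Type*} [DecidableEq ι] [CommRing R]

def blockShift (A : Matrix n n R) (σ : ι → ι) : Matrix (ι × n) (ι × n) R :=
  fun x y => if y.1 = σ x.1 then A x.2 y.2 else 0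

def blockColUnipotent [DecidableEq n] (z : ι) (W : ι → Matrix n n R) :
    Matrix (ι × n) (ι × n) R :=
  fun x y => if y.1 = z then W x.1 x.2 y.2 else if x = y then 1 else 0

theorem blockShift_map {S : Type*} [CommRing S] (f : R →+* S) (A : Matrix n n R) (σ : ι → ι) :
    (blockShift A σ).map f = blockShift (A.map f) σ := by
  ext x y
  simp [blockShift, apply_ite f]

theorem blockColUnipotent_map [DecidableEq n] {S : Type*} [CommRing S] (f : R →+* S) (z : ι)
    (W : ι → Matrix n n R) :
    (blockColUnipotent z W).map f = blockColUnipotent z fun α => (W α).map f := by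
  ext x y
  simp [blockColUnipotent, apply_ite f]

theorem blockColUnipotent_sub_one_apply [DecidableEq n] {z : ι} {W : ι → Matrix n n R}
    (hW : W z = 1) (x y : ι × n) :
    (blockColUnipotent z W - 1) x y = if y.1 = z ∧ x.1 ≠ z then W x.1 x.2 y.2 else 0 := by
  obtain ⟨α, a⟩ := x
  obtain ⟨β, b⟩ := y
  rcases eq_or_ne β z with rfl | hβ
  · rcases eq_or_ne α β with rfl | hα
    · simp [blockColUnipotent, one_apply, hW]
    · simp [blockColUnipotent, hα]
  · simp [blockColUnipotent, one_apply, hβ]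

variable [Fintype ι] [Fintype n]

theorem blockShift_mulVec (A : Matrix n n R) (σ : ι → ι) (u : ι × n → R) (α : ι) (a : n) :
    (blockShift A σ *ᵥ u) (α, a) = (A *ᵥ fun c => u (σ α, c)) a := by
  simp only [mulVec, dotProduct, blockShift, ite_mul, zero_mul, Fintype.sum_prod_type]
  rw [Finset.sum_eq_single (σ α) (fun β _ hβ => by simp [hβ]) (by simp)]
  simp

variable [DecidableEq n]

theorem isUnit_blockColUnipotent {z : ι} {W : ι → Matrix n n R} (hW : W z = 1) :
    IsUnit (blockColUnipotent z W) := by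
  have hsq : (blockColUnipotent z W - 1) * (blockColUnipotent z W - 1) = 0 := by
    ext x y
    refine Finset.sum_eq_zero fun w _ => ?_
    simp only [blockColUnipotent_sub_one_apply hW]
    by_cases hw : w.1 = z <;> simp [hw]
  simpa using (IsNilpotent.isUnit_one_add ⟨2, by rw [sq, hsq]⟩ :
    IsUnit (1 + (blockColUnipotent z W - 1)))

theorem blockColUnipotent_mulVec_of_eq_zero {z : ι} (W : ι → Matrix n n R) {w : ι × n → R}
    (hw : ∀ b, w (z, b) = 0) : blockColUnipotent z W *ᵥ w = w := by
  have hw' : ∀ y : ι × n, y.1 = z → w y = 0 := by rintro ⟨_, b⟩ rfl; exact hw b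
  ext x
  rw [mulVec, dotProduct, Finset.sum_eq_single x]
  · by_cases hx : x.1 = z <;> simp [blockColUnipotent, hx, hw']
  · intro y _ hyx
    by_cases hy : y.1 = z <;> simp [blockColUnipotent, hy, hw', Ne.symm hyx]
  · simp

theorem conj_blockShift_sub_one_apply_eq_zero {A : Matrix n n R} {σ : ι → ι} {z : ι}
    {W : ι → Matrix n n R} (hW : ∀ α, A * W (σ α) = W α) (x : ι × n) (b : n) :
    ((blockColUnipotent z W)⁻¹ * (blockShift A σ - 1) * blockColUnipotent z W) x (z, b) = 0 := by
  rw [mul_assoc, mul_apply]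
  refine Finset.sum_eq_zero fun y _ => mul_eq_zero_of_right _ ?_
  obtain ⟨α, a⟩ := y
  change ((blockShift A σ - 1) *ᵥ fun y => blockColUnipotent z W y (z, b)) (α, a) = 0
  simp only [blockColUnipotent, if_true, sub_mulVec, one_mulVec, Pi.sub_apply,
    blockShift_mulVec]
  change (A * W (σ α)) a b - W α a b = 0
  rw [hW, sub_self]

variable {κ : Type*} {U : κ → Matrix n n R} {σ : κ → ι → ι} {z : ι}

theorem eq_zero_of_forall_blockShift_sub_one_mulVec_eq_zero (hU : ∀ i, IsUnit (U i))
    (hσ : ∀ α, Relation.ReflTransGen (fun a b => ∃ i, σ i a = b) z α) {u : ι × n → R}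
    (hu : ∀ i, (blockShift (U i) (σ i) - 1) *ᵥ u = 0) (hz : ∀ b, u (z, b) = 0) : u = 0 := by
  suffices h : ∀ α, (fun c => u (α, c)) = 0 from funext fun x => congrFun (h x.1) x.2
  intro α
  induction hσ α with
  | refl => exact funext hz
  | @tail β _ _ hstep ih =>
    obtain ⟨i, rfl⟩ := hstep
    have hrel : U i *ᵥ (fun c => u (σ i β, c)) = fun c => u (β, c) := funext fun a => by
      have h := congrFun (hu i) (β, a)
      rwa [sub_mulVec, one_mulVec, Pi.sub_apply, blockShift_mulVec, Pi.zero_apply,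
        sub_eq_zero] at h
    exact (hU i).smul_eq_zero.mp (hrel.trans ih)

theorem eq_zero_of_forall_conj_submatrix_ne_mulVec_eq_zero (hU : ∀ i, IsUnit (U i))
    (hσ : ∀ α, Relation.ReflTransGen (fun a b => ∃ i, σ i a = b) z α) (W : ι → Matrix n n R)
    {M : κ → Matrix (ι × n) (ι × n) R}
    (hM : ∀ i, blockColUnipotent z W * M i =
      (blockShift (U i) (σ i) - 1) * blockColUnipotent z W)
    {v : {a // a ≠ z} × n → R}
    (hv : ∀ i, (M i).submatrix id (fun x : {a // a ≠ z} × n => (x.1.1, x.2)) *ᵥ v = 0) :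
    v = 0 := by
  set w : ι × n → R := fun y => if h : y.1 = z then 0 else v (⟨y.1, h⟩, y.2)
  have hw : ∀ b, w (z, b) = 0 := fun b => dif_pos rfl
  have hQw := blockColUnipotent_mulVec_of_eq_zero W hw
  have hw0 : w = 0 := eq_zero_of_forall_blockShift_sub_one_mulVec_eq_zero hU hσ (fun i => by
    rw [← hQw, mulVec_mulVec, ← hM i, ← mulVec_mulVec, ← submatrix_ne_mulVec, hv i,
      mulVec_zero]) hw
  funext y
  simpa [w, dif_neg y.1.2] using congrFun hw0 (y.1.1, y.2)

end BlockShift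

section Lift

variable {κ m n : Type*} [Fintype κ] [Fintype m] [Fintype n] [DecidableEq n]

theorem exists_sum_mul_eq_one_of_injective {K : Type*} [Field K] (A : κ → Matrix m n K)
    (hA : ∀ v, (∀ i, A i *ᵥ v = 0) → v = 0) : ∃ C : κ → Matrix n m K, ∑ i, C i * A i = 1 := by
  classical
  let S : Matrix (κ × m) n K := of fun r c => A r.1 r.2 c
  have hS : LinearMap.ker S.mulVecLin = ⊥ :=
    ker_mulVecLin_eq_bot_iff.mpr fun v hv => hA v fun i => funext fun x => congrFun hv (i, x)
  obtain ⟨g, hg⟩ := LinearMap.exists_leftInverse_of_injective _ hS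
  have hTS : LinearMap.toMatrix' g * S = 1 := by
    rw [← LinearMap.toMatrix'_toLin' S, ← LinearMap.toMatrix'_comp, toLin'_apply', hg,
      LinearMap.toMatrix'_id]
  refine ⟨fun i => of fun x y => LinearMap.toMatrix' g x (i, y), ?_⟩
  rw [← hTS]
  ext x y
  simp [mul_apply, sum_apply, Fintype.sum_prod_type, S]

theorem exists_isUnit_sum_mul_of_map_injective {R K : Type*} [CommRing R] [IsLocalRing R]
    [Field K] (f : R →+* K) (hf : Surjective f) (A : κ → Matrix m n R)
    (hA : ∀ v, (∀ i, (A i).map f *ᵥ v = 0) → v = 0) :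
    ∃ C : κ → Matrix n m R, IsUnit (∑ i, C i * A i) := by
  obtain ⟨C, hC⟩ := exists_sum_mul_eq_one_of_injective _ hA
  refine ⟨fun i => (C i).map (surjInv hf), ?_⟩
  have hmap : (∑ i, (C i).map (surjInv hf) * A i).map f = 1 := by
    rw [← hC, ← RingHom.mapMatrix_apply, map_sum]
    simp [Matrix.map_mul, Matrix.map_map, comp_def, surjInv_eq hf]
  have := IsLocalHom.of_surjective f hf
  rw [isUnit_iff_isUnit_det]
  refine isUnit_of_map_unit f _ ?_
  rw [RingHom.map_det, RingHom.mapMatrix_apply, hmap, det_one]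
  exact isUnit_one

theorem exists_isUnit_sum_mul_conj_submatrix_ne {ι R S K : Type*} [Fintype ι] [DecidableEq ι]
    [CommRing R] [CommRing S] [IsLocalRing S] [Field K] (c : R →+* S) (g : S →+* K)
    (hg : Surjective g) {U : κ → Matrix n n R} (hU : ∀ i, IsUnit (U i))
    {σ : κ → ι → ι} {z : ι} (hσ : ∀ α, Relation.ReflTransGen (fun a b => ∃ i, σ i a = b) z α)
    {W : ι → Matrix n n R} (hW : W z = 1) :
    ∃ C : κ → Matrix ({a // a ≠ z} × n) (ι × n) S, IsUnit (∑ i, C i *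
      (((blockColUnipotent z W)⁻¹ * (blockShift (U i) (σ i) - 1) * blockColUnipotent z W).map c
        |>.submatrix id fun x : {a // a ≠ z} × n => (x.1.1, x.2))) := by
  set Q := blockColUnipotent z W
  have hQ : IsUnit Q.det := (isUnit_iff_isUnit_det Q).mp (isUnit_blockColUnipotent hW)
  set f := g.comp c
  refine exists_isUnit_sum_mul_of_map_injective g hg _ fun v hv =>
    eq_zero_of_forall_conj_submatrix_ne_mulVec_eq_zero (U := fun i => (U i).map f)
      (fun i => (hU i).map f.mapMatrix) hσ (fun α => (W α).map f)
      (M := fun i => (Q⁻¹ * (blockShift (U i) (σ i) - 1) * Q).map f) (fun i => ?_) fun i => ?_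
  · rw [← blockShift_map, ← Matrix.map_one f (map_zero f) (map_one f),
      ← Matrix.map_sub _ (map_sub f), ← blockColUnipotent_map, ← Matrix.map_mul,
      ← Matrix.map_mul, mul_assoc, mul_nonsing_inv_cancel_left _ _ hQ]
  · exact hv i

end Lift

end Matrix

/-- Lemma `ms_pabz`.  Block indices `γ(α)` are realized by the dependent
product type `ι = Π i, Fin (p_i − 1)`, full indices by `ι × Fin d` (with `Fin d` innermost). -/
theorem ms_pabz (k d : ℕ)
    (P : Fin k → ℕ) (hP : ∀ i, (P i).Prime)
    (U : Fin k → Matrix (Fin d) (Fin d) ℤ)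
    (hUunit : ∀ i, IsUnit (U i))
    (hUcomm : ∀ i j, Commute (U i) (U j))
    (hUord : ∀ i, U i ^ (P i - 1) = 1) :
    let ια := (i : Fin k) → Fin (P i - 1)
    let ι := ια × Fin d
    let zα : ια := fun i => ⟨0, by have := (hP i).two_le; omega⟩
    -- U^{⟨α⟩} = U₁^{−α₁}⋯U_k^{−α_k}  (inverses realized via U_i^{p_i−1} = 1)
    let Uinv : ια → Matrix (Fin d) (Fin d) ℤ := fun α =>
      Finset.univ.noncommProd (fun i => U i ^ (P i - 1 - (α i : ℕ)))
        (fun i _ j _ _ => Commute.pow_pow (hUcomm i j) _ _)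
    -- D_i = U_i ⊗ P̂_iᵀ − I
    let D : Fin k → Matrix ι ι ℤ := fun i => fun x y =>
      (if (∀ j, j ≠ i → y.1 j = x.1 j) ∧ ((x.1 i : ℕ) + 1) % (P i - 1) = (y.1 i : ℕ)
        then U i x.2 y.2 else 0) -
      (if x = y then 1 else 0)
    -- Q: blocks U^{⟨α⟩} in the 0-th column of blocks, I_d on the diagonal, 0 elsewhere
    let Q : Matrix ι ι ℤ := fun x y =>
      if y.1 = zα then Uinv x.1 x.2 y.2 else (if x = y then 1 else 0)
    -- (a) Q is invertible over ℤ
    IsUnit Q ∧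
    -- (b) the first d columns of Q⁻¹D_iQ vanish
    (∀ (i : Fin k) (x : ι) (b : Fin d), (Q⁻¹ * D i * Q) x (zα, b) = 0) ∧
    -- (c) for every prime p there are C-matrices over ℤ_p making Σ Ĉ_iD̂_i + C̃_iD̃_i invertible
    (∀ (p : ℕ) [Fact p.Prime],
      let ι' := {α : ια // α ≠ zα} × Fin d
      let Dhat : Fin k → Matrix (Fin d) ι' ℤ_[p] := fun i =>
        ((Q⁻¹ * D i * Q).map (Int.castRingHom ℤ_[p])).submatrix
          (fun b : Fin d => (zα, b)) (fun x : ι' => (x.1.1, x.2))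
      let Dtil : Fin k → Matrix ι' ι' ℤ_[p] := fun i =>
        ((Q⁻¹ * D i * Q).map (Int.castRingHom ℤ_[p])).submatrix
          (fun x : ι' => (x.1.1, x.2)) (fun x : ι' => (x.1.1, x.2))
      ∃ (Chat : Fin k → Matrix ι' (Fin d) ℤ_[p]) (Ctil : Fin k → Matrix ι' ι' ℤ_[p]),
        IsUnit (∑ i : Fin k, (Chat i * Dhat i + Ctil i * Dtil i))) := by
  intro ια ι zα Uinv D Q
  have hD : ∀ i, D i = blockShift (U i) (cycSuccAt i) - 1 := fun i => by
    ext x y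
    rw [Matrix.sub_apply, one_apply]
    exact congrArg (· - _) (if_congr eq_cycSuccAt_iff.symm rfl rfl)
  have hWz : Uinv zα = 1 := powProd_eq_one hUcomm fun i => hUord i
  have hW : ∀ i α, U i * Uinv (cycSuccAt i α) = Uinv α := mul_powProd_cycSuccAt hUcomm hUord
  refine ⟨isUnit_blockColUnipotent hWz, fun i x b => ?_, ?_⟩
  · rw [hD]
    exact conj_blockShift_sub_one_apply_eq_zero (hW i) x b
  intro p _ ι' Dhat Dtil
  obtain ⟨C, hC⟩ := exists_isUnit_sum_mul_conj_submatrix_ne (Int.castRingHom ℤ_[p])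
    PadicInt.toZMod (ZMod.ringHom_surjective _) hUunit (reflTransGen_cycSuccAt fun _ => rfl) hWz
  refine ⟨fun i => (C i).submatrix id fun b => (zα, b),
    fun i => (C i).submatrix id fun x : ι' => (x.1.1, x.2), ?_⟩
  convert hC using 3 with i
  rw [← hD, mul_eq_add_submatrix_ne zα (C i)]
  rfl
end

section
/- Let d ≥ 1, n₂ ≥ 1 and n₁ ≥ 2 be integers, n = n₁n₂, and let U₁ ∈ GL_d(ℤ) satisfy U₁^{n₁} = I_d. Let Ĉ ∈ M_{(n−n₂)d, n₂d}(ℤ) be the block matrix obtained by stacking vertically the blocks U₁^{−1}⊗I_{n₂}, U₁^{−2}⊗I_{n₂}, …, U₁^{−n₁+1}⊗I_{n₂}, and let Q₁ = [[I_{n₂d}, 0],[Ĉ, I_{(n−n₂)d}]]. Set D = U₁ ⊗ I_{n₂} ⊗ P_{n₁}^T (with U₁ the innermost Kronecker factor). Then the first n₂d columns of Q₁^{−1}DQ₁ − I_{nd} are zero, so Q₁^{−1}DQ₁ − I_{nd} = [[0, D̂],[0, D̃]] with D̂ ∈ M_{n₂d, (n−n₂)d}(ℤ) and D̃ ∈ M_{(n−n₂)d}(ℤ),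 and moreover Ĉ·D̂ + D̃ ∈ GL_{(n−n₂)d}(ℤ). -/
/-!
`Q₁ - 1` only maps block `0` into the blocks `i ≠ 0`, so it squares to zero and `Q₁` is
invertible. The block-`0` columns of `Q₁` are `(U^{-i} ⊗ I)_i`; because `U^{n₁} = I` they are fixed
by `D`, which is why the first columns of `Q₁⁻¹DQ₁ - I` vanish. All other columns of `Q₁` are
unit vectors, so `Ĉ·D̂ + D̃` is the lower-right block of `Q₁(Q₁⁻¹DQ₁ - I) = DQ₁ - Q₁`, namely
`D' - I` for the restriction `D'` of `D` to the blocks `i ≠ 0`. In `D'` the cyclic shift has lost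
its wrap-around into block `0`, so `D'` strictly raises the block index, hence is nilpotent, and
`D' - I` is a unit.
-/

theorem mul_pow_sub_succ_mod {M : Type*} [Monoid M] {u : M} {n a : ℕ} (hu : u ^ n = 1)
    (ha : a < n) : u * u ^ (n - (a + 1) % n) = u ^ (n - a) := by
  rcases Nat.lt_or_ge (a + 1) n with h | h
  · rw [Nat.mod_eq_of_lt h, ← pow_succ']
    congr 1
    omega
  · obtain rfl : n = a + 1 := by omega
    rw [Nat.mod_self, Nat.sub_zero, hu, mul_one, Nat.add_sub_cancel_left, pow_one]

namespace Matrix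

section Graded

variable {σ R : Type*} [Fintype σ] [DecidableEq σ] [Semiring R] {A : Matrix σ σ R} {ℓ : σ → ℕ}

theorem pow_apply_eq_zero_of_apply_ne_zero_lt (hA : ∀ a b, A a b ≠ 0 → ℓ a < ℓ b) :
    ∀ (k : ℕ) (a b : σ), ℓ b < ℓ a + k → (A ^ k) a b = 0
  | 0, a, b, h => one_apply_ne (by rintro rfl; omega)
  | k + 1, a, b, h => by
    rw [pow_succ', mul_apply]
    refine Finset.sum_eq_zero fun c _ => ?_
    by_cases hac : A a c = 0
    · rw [hac, zero_mul]
    · have := hA a c hac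
      rw [pow_apply_eq_zero_of_apply_ne_zero_lt hA k c b (by omega), mul_zero]

theorem isNilpotent_of_apply_ne_zero_lt (hA : ∀ a b, A a b ≠ 0 → ℓ a < ℓ b) :
    IsNilpotent A := by
  refine ⟨Finset.univ.sup ℓ + 1, ext fun a b => ?_⟩
  have := Finset.le_sup (f := ℓ) (Finset.mem_univ b)
  exact pow_apply_eq_zero_of_apply_ne_zero_lt hA _ a b (by omega)

end Graded

theorem conj_sub_one_apply_eq_zero {κ R : Type*} [Fintype κ] [DecidableEq κ] [CommRing R]
    {Q D : Matrix κ κ R} (hQ : IsUnit Q) {y : κ} (hy : ∀ x, (D * Q) x y = Q x y) (x : κ) :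
    (Q⁻¹ * D * Q - 1) x y = 0 := by
  rw [sub_apply, mul_assoc, mul_apply]
  simp_rw [hy]
  rw [← mul_apply, nonsing_inv_mul Q ((isUnit_iff_isUnit_det Q).1 hQ), sub_self]

section Blocks

variable {α κ R : Type*}

def offBlock (z : α) (x : {i : α // i ≠ z} × κ) : α × κ := (x.1.1, x.2)

theorem offBlock_injective (z : α) : Function.Injective (offBlock (κ := κ) z) :=
  fun _ _ h => Prod.ext (Subtype.ext (Prod.ext_iff.1 h).1) (Prod.ext_iff.1 h).2

variable [Fintype α] [DecidableEq α] [Fintype κ] [DecidableEq κ] [CommRing R] {z : α}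

theorem mul_apply_offBlock {A : Matrix (α × κ) (α × κ) R}
    (hA : ∀ x s, A x (offBlock z s) = if x = offBlock z s then 1 else 0)
    (B : Matrix (α × κ) (α × κ) R) (a : {i // i ≠ z} × κ) (y : α × κ) :
    (A * B) (offBlock z a) y =
      ∑ w, A (offBlock z a) (z, w) * B (z, w) y + B (offBlock z a) y := by
  rw [mul_apply, Fintype.sum_prod_type, Fintype.sum_eq_add_sum_subtype_ne _ z,
    ← Fintype.sum_prod_type']
  congr 1
  change ∑ x, A (offBlock z a) (offBlock z x) * B (offBlock z x) y = _
  simp only [hA, (offBlock_injective z).eq_iff, ite_mul, one_mul, zero_mul, Finset.sum_ite_eq,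
    Finset.mem_univ, if_true]

theorem lowerLeft_mul_upperRight_add_lowerRight_conj_sub_one {Q : Matrix (α × κ) (α × κ) R}
    (hQ : IsUnit Q) (hQcol : ∀ x s, Q x (offBlock z s) = if x = offBlock z s then 1 else 0)
    (D : Matrix (α × κ) (α × κ) R) :
    of (fun a w => Q (offBlock z a) (z, w)) *
        (Q⁻¹ * D * Q - 1).submatrix (Prod.mk z) (offBlock z) +
      (Q⁻¹ * D * Q - 1).submatrix (offBlock z) (offBlock z) =
      D.submatrix (offBlock z) (offBlock z) - 1 := by
  have hQM : Q * (Q⁻¹ * D * Q - 1) = D * Q - Q := by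
    rw [mul_sub, mul_one, ← mul_assoc, ← mul_assoc,
      mul_nonsing_inv Q ((isUnit_iff_isUnit_det Q).1 hQ), one_mul]
  ext a b
  have h := mul_apply_offBlock hQcol (Q⁻¹ * D * Q - 1) a (offBlock z b)
  rw [hQM, sub_apply, mul_apply] at h
  simp only [hQcol, (offBlock_injective z).eq_iff, mul_ite, mul_one, mul_zero,
    Finset.sum_ite_eq', Finset.mem_univ, if_true] at h
  simp only [add_apply, mul_apply, of_apply, submatrix_apply, sub_apply, one_apply, h]

end Blocks

section Shift

variable {β δ R : Type*} [DecidableEq β] [Fintype δ] [DecidableEq δ] [CommRing R]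
  (U : Matrix δ δ R) {n : ℕ}

/-- The paper's `U ⊗ I_β ⊗ P_nᵀ`, `U` being the innermost Kronecker factor. -/
def shiftKron (n : ℕ) : Matrix (Fin n × β × δ) (Fin n × β × δ) R :=
  fun x y => if ((x.1 : ℕ) + 1) % n = (y.1 : ℕ) ∧ x.2.1 = y.2.1 then U x.2.2 y.2.2 else 0

/-- The paper's `Q₁`: block column `0` is `(U^{n-i} ⊗ I_β)_i`, which is `(U^{-i} ⊗ I_β)_i`
when `U ^ n = 1`; all other columns are unit vectors. -/
def shiftConjugator (n : ℕ) : Matrix (Fin n × β × δ) (Fin n × β × δ) R :=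
  fun x y =>
    if (y.1 : ℕ) = 0 then (if x.2.1 = y.2.1 then (U ^ (n - (x.1 : ℕ))) x.2.2 y.2.2 else 0)
    else (if x = y then 1 else 0)

theorem shiftConjugator_apply_offBlock (hn : 0 < n) (x : Fin n × β × δ)
    (s : {i : Fin n // i ≠ ⟨0, hn⟩} × β × δ) :
    shiftConjugator U n x (offBlock _ s) = if x = offBlock _ s then 1 else 0 := by
  have hs : ((s.1 : Fin n) : ℕ) ≠ 0 := fun h => s.1.2 (Fin.ext h)
  simp only [shiftConjugator, offBlock, hs, if_false]

theorem shiftConjugator_sub_one_apply_ne_zero (hU : U ^ n = 1) {x y : Fin n × β × δ}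
    (h : (shiftConjugator U n - 1) x y ≠ 0) : (x.1 : ℕ) ≠ 0 ∧ (y.1 : ℕ) = 0 := by
  by_cases hy : (y.1 : ℕ) = 0
  · refine ⟨fun hx => h ?_, hy⟩
    simp [shiftConjugator, hx, hy, hU, one_apply, Prod.ext_iff, Fin.ext_iff, ite_and]
  · simp [shiftConjugator, one_apply, hy] at h

variable [Fintype β]

theorem isUnit_shiftConjugator (hU : U ^ n = 1) : IsUnit (shiftConjugator (β := β) U n) := by
  have hN : IsNilpotent (shiftConjugator (β := β) U n - 1) :=
    isNilpotent_of_apply_ne_zero_lt (ℓ := fun x => if (x.1 : ℕ) = 0 then 1 else 0)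
      fun x y hxy => by
        obtain ⟨hx, hy⟩ := shiftConjugator_sub_one_apply_ne_zero U hU hxy
        simp [hx, hy]
  simpa using hN.isUnit_one_add

theorem shiftKron_mul_shiftConjugator_apply_zero (hU : U ^ n = 1) (hn : 0 < n)
    (x : Fin n × β × δ) (w : β × δ) :
    (shiftKron U n * shiftConjugator U n : Matrix (Fin n × β × δ) _ R) x (⟨0, hn⟩, w) =
      shiftConjugator U n x (⟨0, hn⟩, w) := by
  set s : Fin n := ⟨((x.1 : ℕ) + 1) % n, Nat.mod_lt _ hn⟩
  rw [mul_apply, Fintype.sum_prod_type, Finset.sum_eq_single s, Fintype.sum_prod_type,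
    Finset.sum_eq_single x.2.1]
  · simp only [shiftKron, shiftConjugator, s, and_self, if_true, mul_ite, mul_zero]
    split_ifs
    · rw [← mul_apply, mul_pow_sub_succ_mod hU x.1.isLt]
    · simp
  · intro j _ hj
    simp [shiftKron, Ne.symm hj]
  · simp
  · intro i _ hi
    have hxi : ((x.1 : ℕ) + 1) % n ≠ i := fun h => hi (Fin.ext h.symm)
    simp [shiftKron, hxi]
  · simp

theorem isNilpotent_shiftKron_submatrix_offBlock (hn : 0 < n) :
    IsNilpotent ((shiftKron (β := β) U n).submatrix (offBlock ⟨0, hn⟩) (offBlock ⟨0, hn⟩)) := by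
  refine isNilpotent_of_apply_ne_zero_lt (ℓ := fun a => (a.1.1 : ℕ)) fun a b hab => ?_
  have hb : ((b.1 : Fin n) : ℕ) ≠ 0 := fun h => b.1.2 (Fin.ext h)
  have hmod : ((a.1.1 : ℕ) + 1) % n = b.1.1 := by
    by_contra h
    exact hab (by simp [shiftKron, offBlock, h])
  have ha := a.1.1.isLt
  rcases Nat.lt_or_ge ((a.1.1 : ℕ) + 1) n with h | h
  · rw [Nat.mod_eq_of_lt h] at hmod
    omega
  · rw [show (a.1.1 : ℕ) + 1 = n by omega, Nat.mod_self] at hmod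
    exact absurd hmod.symm hb

end Shift

end Matrix

/-- Lemma `v_unr`.  Conjugating `D = U₁ ⊗ I_{n₂} ⊗ P_{n₁}ᵀ` by the
block-unitriangular matrix `Q₁` kills the first `n₂d` columns of `Q₁⁻¹DQ₁ − I`, and
`Ĉ·D̂ + D̃` is invertible.  Indices are realized by `Fin n₁ × Fin n₂ × Fin d` (with the
`Fin d`-factor innermost), the first `n₂d` rows/columns being those with first component `0`. -/
theorem v_unr (d n₁ n₂ : ℕ) (hn₁ : 2 ≤ n₁)
    (U : Matrix (Fin d) (Fin d) ℤ) (hU : U ^ n₁ = 1) :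
    let ι := Fin n₁ × Fin n₂ × Fin d
    let z : Fin n₁ := ⟨0, by omega⟩
    -- D = U ⊗ I_{n₂} ⊗ P_{n₁}ᵀ
    let D : Matrix ι ι ℤ := fun x y =>
      if ((x.1 : ℕ) + 1) % n₁ = (y.1 : ℕ) ∧ x.2.1 = y.2.1 then U x.2.2 y.2.2 else 0
    -- Q₁ = [[I, 0], [Ĉ, I]] with Ĉ stacking U^{-1}⊗I_{n₂}, …, U^{-n₁+1}⊗I_{n₂}
    let Q : Matrix ι ι ℤ := fun x y =>
      if (y.1 : ℕ) = 0 then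
        (if x.2.1 = y.2.1 then (U ^ (n₁ - (x.1 : ℕ))) x.2.2 y.2.2 else 0)
      else (if x = y then 1 else 0)
    let M : Matrix ι ι ℤ := Q⁻¹ * D * Q - 1
    -- the lower-left block Ĉ of Q₁ and the blocks D̂, D̃ of Q₁⁻¹DQ₁ − I
    let Chat : Matrix ({i : Fin n₁ // i ≠ z} × Fin n₂ × Fin d) (Fin n₂ × Fin d) ℤ :=
      fun x y => Q (x.1.1, x.2) (z, y)
    let Dhat : Matrix (Fin n₂ × Fin d) ({i : Fin n₁ // i ≠ z} × Fin n₂ × Fin d) ℤ :=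
      M.submatrix (fun y : Fin n₂ × Fin d => (z, y))
        (fun x : {i : Fin n₁ // i ≠ z} × Fin n₂ × Fin d => (x.1.1, x.2))
    let Dtil : Matrix ({i : Fin n₁ // i ≠ z} × Fin n₂ × Fin d)
        ({i : Fin n₁ // i ≠ z} × Fin n₂ × Fin d) ℤ :=
      M.submatrix
        (fun x : {i : Fin n₁ // i ≠ z} × Fin n₂ × Fin d => (x.1.1, x.2))
        (fun x : {i : Fin n₁ // i ≠ z} × Fin n₂ × Fin d => (x.1.1, x.2))
    -- the first n₂d columns of Q₁⁻¹DQ₁ − I vanish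
    (∀ (x : ι) (j : Fin n₂) (b : Fin d), M x (z, j, b) = 0) ∧
    -- Ĉ·D̂ + D̃ is invertible over ℤ
    IsUnit (Chat * Dhat + Dtil) := by
  intro ι z D Q M Chat Dhat Dtil
  have hn : 0 < n₁ := by omega
  have hQ : IsUnit Q := Matrix.isUnit_shiftConjugator U hU
  refine ⟨fun x j b => Matrix.conj_sub_one_apply_eq_zero hQ
    (fun x => Matrix.shiftKron_mul_shiftConjugator_apply_zero U hU hn x (j, b)) x, ?_⟩
  have hblocks : Chat * Dhat + Dtil = D.submatrix (Matrix.offBlock z) (Matrix.offBlock z) - 1 :=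
    Matrix.lowerLeft_mul_upperRight_add_lowerRight_conj_sub_one hQ
      (Matrix.shiftConjugator_apply_offBlock U hn) D
  rw [hblocks]
  exact (Matrix.isNilpotent_shiftKron_submatrix_offBlock U hn).isUnit_sub_one
end

section
/- Let p be a prime and n₂ ≥ 1 with n₂ | p−1, let ζ ∈ ℤ_p be a primitive n₂-th root of unity, and let V ∈ M_{n₂}(ℤ_p) be the diagonal matrix with diagonal entries ζ^{−j}, j = 0,…,n₂−1. Let d ≥ 1, 0 ≤ d₀ ≤ d, and integers i_l with i_l = 0 for 1 ≤ l ≤ d₀ and 1 ≤ i_l ≤ n₂−1 for d₀ < l ≤ d. Let U₂, W ∈ GL_d(ℤ_p) be such that W^{−1}U₂^T W is the diagonal matrix with l-th diagonal entry ζ^{i_l}. Let τ be the permutation of {1,…,n₂d} defined by τ(jd+l) = j₁d+l for 0 ≤ j ≤ n₂−1, 1 ≤ l ≤ d, where 0 ≤ j₁ ≤ n₂−1 and j₁ ≡ j+i_l mod n₂, and let P_τ ∈ M_{n₂d}(ℤ) be its permutation matrix, (P_τ)_{α,β} = δ_α^{τ(β)}. Set Q₂ = ((W^T) ⊗ I_{n₂})^{−1}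 P_τ and D = U₂ ⊗ V (with U₂ the innermost Kronecker factor). Then Q₂^{−1}DQ₂ − I_{n₂d} = [[0, 0],[0, D̃]], where the upper-left zero block is d×d and D̃ ∈ M_{(n₂−1)d}(ℤ_p) is invertible over ℤ_p. -/
open Matrix Kronecker

lemma unit_aux (p : ℕ) [hp : Fact p.Prime] (n₂ : ℕ) (hn₂ : 0 < n₂) (hn₂p : n₂ ∣ p - 1)
    (ζ : ℤ_[p]) (hζ : IsPrimitiveRoot ζ n₂) (k : ℕ) (hk0 : 0 < k) (hk : k < n₂) :
    IsUnit (ζ ^ k - 1) := by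
  by_contra h
  have hn2unit : IsUnit (n₂ : ℤ_[p]) := by
    rw [PadicInt.isUnit_iff]
    have h1 : ‖((n₂ : ℤ) : ℤ_[p])‖ ≤ 1 := PadicInt.norm_le_one _
    have h2 : ¬ ‖((n₂ : ℤ) : ℤ_[p])‖ < 1 := by
      rw [PadicInt.norm_int_lt_one_iff_dvd]
      intro hdvd
      have : (p : ℕ) ∣ n₂ := by exact_mod_cast hdvd
      have h3 := Nat.le_of_dvd hn₂ this
      have h4 := Nat.le_of_dvd (by have := hp.out.two_le; omega) hn₂p
      have := hp.out.two_le
      omega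
    push_cast at h1 h2 ⊢
    linarith
  have hne : ζ ^ k - 1 ≠ 0 := by
    intro h0
    have : ζ ^ k = 1 := by linear_combination h0
    have := Nat.le_of_dvd hk0 ((hζ.pow_eq_one_iff_dvd k).mp this)
    omega
  have hgeo : (∑ i ∈ Finset.range n₂, (ζ ^ k) ^ i) * (ζ ^ k - 1) = 0 := by
    rw [geom_sum_mul, ← pow_mul, mul_comm, pow_mul, hζ.pow_eq_one, one_pow, sub_self]
  have hsum : (∑ i ∈ Finset.range n₂, (ζ ^ k) ^ i) = 0 := by
    rcases mul_eq_zero.mp hgeo with h' | h'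
    · exact h'
    · exact absurd h' hne
  have hdvdsum : (ζ ^ k - 1) ∣ ((∑ i ∈ Finset.range n₂, (ζ ^ k) ^ i) - n₂) := by
    have he : (∑ i ∈ Finset.range n₂, (ζ ^ k) ^ i) - n₂
        = ∑ i ∈ Finset.range n₂, ((ζ ^ k) ^ i - 1) := by
      rw [Finset.sum_sub_distrib]; simp
    rw [he]
    exact Finset.dvd_sum fun i _ => by simpa using sub_dvd_pow_sub_pow (ζ ^ k) 1 i
  rw [hsum, zero_sub, dvd_neg] at hdvdsum
  exact h (isUnit_of_dvd_unit hdvdsum hn2unit)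

/-- Lemma `v_ram`.  With `Q₂ = ((Wᵀ)⊗I_{n₂})⁻¹P_τ` and `D = U₂ ⊗ V`,
the matrix `Q₂⁻¹DQ₂ − I` vanishes on the first `d` rows and the first `d` columns, and its
remaining principal block is invertible over `ℤ_p`.  Indices are realized by
`Fin n₂ × Fin d` (with the `Fin d`-factor innermost), the first `d` rows/columns being
those with first component `0`. -/
theorem v_ram (p : ℕ) [hp : Fact p.Prime] (n₂ : ℕ) (hn₂ : 0 < n₂) (hn₂p : n₂ ∣ p - 1)
    (ζ : ℤ_[p]) (hζ : IsPrimitiveRoot ζ n₂)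
    (d d₀ : ℕ) (hd₀ : d₀ ≤ d)
    (il : Fin d → ℕ)
    (hil0 : ∀ l : Fin d, (l : ℕ) < d₀ → il l = 0)
    (hil1 : ∀ l : Fin d, d₀ ≤ (l : ℕ) → 1 ≤ il l ∧ il l ≤ n₂ - 1)
    (U₂ W : Matrix (Fin d) (Fin d) ℤ_[p])
    (hU₂ : IsUnit U₂) (hW : IsUnit W)
    (hdiag : W⁻¹ * U₂.transpose * W = Matrix.diagonal (fun l => ζ ^ il l)) :
    let ι := Fin n₂ × Fin d
    let z : Fin n₂ := ⟨0, hn₂⟩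
    -- D = U₂ ⊗ V, where V = diag(ζ^{-j}) (and ζ^{-j} = ζ^{n₂-j})
    let D : Matrix ι ι ℤ_[p] := fun x y =>
      (if x.1 = y.1 then ζ ^ (n₂ - (x.1 : ℕ)) else 0) * U₂ x.2 y.2
    -- Wᵀ ⊗ I_{n₂}
    let WTI : Matrix ι ι ℤ_[p] := fun x y => if x.1 = y.1 then W y.2 x.2 else 0
    -- the permutation matrix P_τ, τ(j,l) = (j + i_l mod n₂, l)
    let Pτ : Matrix ι ι ℤ_[p] := fun x y =>
      if (x.1 : ℕ) = ((y.1 : ℕ) + il y.2) % n₂ ∧ x.2 = y.2 then 1 else 0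
    let Q₂ : Matrix ι ι ℤ_[p] := WTI⁻¹ * Pτ
    let M : Matrix ι ι ℤ_[p] := Q₂⁻¹ * D * Q₂ - 1
    -- all the entries in the first d rows and first d columns vanish
    (∀ x y : ι, x.1 = z ∨ y.1 = z → M x y = 0) ∧
    -- the principal block D̃ on the remaining indices is invertible over ℤ_p
    IsUnit (M.submatrix
      (fun x : {j : Fin n₂ // j ≠ z} × Fin d => (x.1.1, x.2))
      (fun x : {j : Fin n₂ // j ≠ z} × Fin d => (x.1.1, x.2))) := by
  intro ι z D WTI Pτ Q₂ M
  haveI : NeZero n₂ := ⟨hn₂.ne'⟩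
  have hpow : ∀ a b : ℕ, a % n₂ = b % n₂ → ζ ^ a = ζ ^ b := by
    have haux : ∀ a : ℕ, ζ ^ a = ζ ^ (a % n₂) := by
      intro a
      conv_lhs => rw [← Nat.mod_add_div a n₂]
      rw [pow_add, pow_mul, hζ.pow_eq_one, one_pow, mul_one]
    intro a b hab
    rw [haux a, haux b, hab]
  set v : Fin n₂ → ℤ_[p] := fun j => ζ ^ (n₂ - (j : ℕ)) with hv
  -- D and WTI as Kronecker products
  have hD : D = Matrix.diagonal v ⊗ₖ U₂ := by
    ext x y
    by_cases h : x.1 = y.1 <;>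
      simp [D, Matrix.kroneckerMap_apply, Matrix.diagonal_apply, h, hv]
  have hWTI : WTI = (1 : Matrix (Fin n₂) (Fin n₂) ℤ_[p]) ⊗ₖ Wᵀ := by
    ext x y
    by_cases h : x.1 = y.1 <;>
      simp [WTI, Matrix.kroneckerMap_apply, Matrix.one_apply, h, Matrix.transpose_apply]
  have hWdet : IsUnit W.det := (Matrix.isUnit_iff_isUnit_det W).mp hW
  have hWTIdet : IsUnit WTI.det := by
    rw [hWTI, Matrix.det_kronecker, Matrix.det_one, one_pow, one_mul, Matrix.det_transpose]
    exact hWdet.pow _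
  have hWTImul1 : WTI * WTI⁻¹ = 1 := Matrix.mul_nonsing_inv _ hWTIdet
  have hWTImul2 : WTI⁻¹ * WTI = 1 := Matrix.nonsing_inv_mul _ hWTIdet
  -- W^T U₂ (W^T)⁻¹ is diagonal
  have hWdiag : Wᵀ * U₂ * (Wᵀ)⁻¹ = Matrix.diagonal (fun l => ζ ^ il l) := by
    have h1 := congrArg Matrix.transpose hdiag
    rw [Matrix.transpose_mul, Matrix.transpose_mul, Matrix.transpose_transpose,
      Matrix.diagonal_transpose, Matrix.transpose_nonsing_inv, ← mul_assoc] at h1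
    exact h1
  have hone : (1 : Matrix (Fin n₂) (Fin n₂) ℤ_[p])⁻¹ = 1 :=
    Matrix.inv_eq_right_inv (by rw [one_mul])
  have hA : WTI * D * WTI⁻¹ = Matrix.diagonal (fun x : ι => v x.1 * ζ ^ il x.2) := by
    rw [hWTI, hD, Matrix.inv_kronecker, hone, ← Matrix.mul_kronecker_mul,
      ← Matrix.mul_kronecker_mul, one_mul, mul_one, hWdiag,
      Matrix.diagonal_kronecker_diagonal]
  -- the permutation σ
  set c : Fin d → Fin n₂ := fun l => ⟨il l % n₂, Nat.mod_lt _ hn₂⟩ with hc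
  set σ : ι ≃ ι :=
    { toFun := fun x => (x.1 + c x.2, x.2)
      invFun := fun x => (x.1 - c x.2, x.2)
      left_inv := fun x => by simp
      right_inv := fun x => by simp } with hσ
  have hσapp : ∀ x : ι, σ x = (x.1 + c x.2, x.2) := fun _ => rfl
  have hval : ∀ y : ι, ((y.1 + c y.2 : Fin n₂) : ℕ) = ((y.1 : ℕ) + il y.2) % n₂ := by
    intro y
    rw [Fin.val_add]
    show ((y.1 : ℕ) + il y.2 % n₂) % n₂ = _
    rw [Nat.add_mod_mod]
  have hPτ : ∀ x y : ι, Pτ x y = if x = σ y then 1 else 0 := by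
    intro x y
    refine if_congr ?_ rfl rfl
    rw [hσapp y, Prod.ext_iff]
    constructor
    · rintro ⟨h1, h2⟩
      exact ⟨Fin.ext (by rw [h1, ← hval y]), h2⟩
    · rintro ⟨h1, h2⟩
      refine ⟨?_, h2⟩
      rw [h1]
      exact hval y
  set Pinv : Matrix ι ι ℤ_[p] := fun x y => if σ x = y then 1 else 0 with hPinv
  have hPmul1 : Pτ * Pinv = 1 := by
    ext x y
    rw [Matrix.mul_apply, Matrix.one_apply,
      Fintype.sum_bijective σ σ.bijective _
        (fun j : ι => (if x = j then (1 : ℤ_[p]) else 0) * (if j = y then 1 else 0))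
        (fun k => by rw [hPτ])]
    simp [Finset.sum_ite_eq]
  have hPmul2 : Pinv * Pτ = 1 := by
    ext x y
    rw [Matrix.mul_apply, Matrix.one_apply, Finset.sum_congr rfl
      (fun k _ => show Pinv x k * Pτ k y
          = (if σ x = k then (1 : ℤ_[p]) else 0) * (if k = σ y then 1 else 0) by
        rw [hPτ])]
    simp [Finset.sum_ite_eq, σ.injective.eq_iff]
  -- the commutation relation Pτ * Δ = A * Pτ
  have hPΔ : Pτ * Matrix.diagonal (fun x : ι => v x.1)
      = Matrix.diagonal (fun x : ι => v x.1 * ζ ^ il x.2) * Pτ := by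
    ext x y
    rw [Matrix.mul_diagonal, Matrix.diagonal_mul, hPτ x y]
    by_cases h : x = σ y
    · subst h
      rw [if_pos rfl, one_mul, mul_one]
      show v y.1 = v (y.1 + c y.2) * ζ ^ il y.2
      symm
      rw [hv]
      show ζ ^ (n₂ - ((y.1 + c y.2 : Fin n₂) : ℕ)) * ζ ^ il y.2 = ζ ^ (n₂ - (y.1 : ℕ))
      rw [hval, ← pow_add]
      apply hpow
      have ha : (y.1 : ℕ) < n₂ := y.1.isLt
      have hb : ((y.1 : ℕ) + il y.2) % n₂ < n₂ := Nat.mod_lt _ hn₂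
      have key : ∀ m : ℕ, ((y.1 : ℕ) + il y.2) % n₂ + m = (y.1 : ℕ) + il y.2 →
          n₂ - ((y.1 : ℕ) + il y.2) % n₂ + il y.2 = (n₂ - (y.1 : ℕ)) + m := by
        intro m hm; omega
      rw [key (n₂ * (((y.1 : ℕ) + il y.2) / n₂)) (Nat.mod_add_div _ _),
        Nat.add_mul_mod_self_left]
    · rw [if_neg h, zero_mul, mul_zero]
  -- conjugation
  have hDW : D * WTI⁻¹ = WTI⁻¹ * Matrix.diagonal (fun x : ι => v x.1 * ζ ^ il x.2) := by
    calc D * WTI⁻¹ = (WTI⁻¹ * WTI) * (D * WTI⁻¹) := by rw [hWTImul2, one_mul]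
    _ = WTI⁻¹ * (WTI * D * WTI⁻¹) := by simp only [mul_assoc]
    _ = WTI⁻¹ * Matrix.diagonal (fun x : ι => v x.1 * ζ ^ il x.2) := by rw [hA]
  have hKey : D * Q₂ = Q₂ * Matrix.diagonal (fun x : ι => v x.1) := by
    show D * (WTI⁻¹ * Pτ) = (WTI⁻¹ * Pτ) * _
    rw [← mul_assoc, hDW, mul_assoc, ← hPΔ, ← mul_assoc]
  have hQinv : Q₂⁻¹ = Pinv * WTI := by
    apply Matrix.inv_eq_right_inv
    show (WTI⁻¹ * Pτ) * (Pinv * WTI) = 1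
    calc (WTI⁻¹ * Pτ) * (Pinv * WTI)
        = WTI⁻¹ * (Pτ * Pinv) * WTI := by
          simp only [mul_assoc]
    _ = 1 := by rw [hPmul1, mul_one, hWTImul2]
  have hRQ : (Pinv * WTI) * Q₂ = 1 := by
    show _ * (WTI⁻¹ * Pτ) = 1
    calc (Pinv * WTI) * (WTI⁻¹ * Pτ)
        = Pinv * (WTI * WTI⁻¹) * Pτ := by
          simp only [mul_assoc]
    _ = 1 := by rw [hWTImul1, mul_one, hPmul2]
  have hMdiag : M = Matrix.diagonal (fun x : ι => v x.1 - 1) := by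
    show Q₂⁻¹ * D * Q₂ - 1 = _
    rw [mul_assoc, hKey, hQinv, ← mul_assoc, hRQ, one_mul, ← Matrix.diagonal_one,
      Matrix.diagonal_sub]
  have hvz : v z - 1 = 0 := by
    rw [hv]
    show ζ ^ (n₂ - ((z : ℕ))) - 1 = 0
    have : (z : ℕ) = 0 := rfl
    rw [this, Nat.sub_zero, hζ.pow_eq_one, sub_self]
  constructor
  · intro x y hxy
    rw [hMdiag, Matrix.diagonal_apply]
    by_cases hxyeq : x = y
    · subst hxyeq
      rw [if_pos rfl]
      rcases hxy with h | h <;> rw [h, hvz]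
    · rw [if_neg hxyeq]
  · rw [hMdiag]
    have hinj : Function.Injective
        (fun x : {j : Fin n₂ // j ≠ z} × Fin d => ((x.1 : Fin n₂), x.2)) := by
      intro a b hab
      rw [Prod.ext_iff] at hab
      exact Prod.ext (Subtype.ext hab.1) hab.2
    rw [Matrix.submatrix_diagonal _ _ hinj, Matrix.isUnit_iff_isUnit_det, Matrix.det_diagonal]
    refine Finset.prod_induction _ IsUnit (fun a b => IsUnit.mul) isUnit_one ?_
    intro x _
    have hjne : ((x.1 : Fin n₂) : ℕ) ≠ 0 := by
      intro h0
      exact x.1.2 (Fin.ext h0)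
    have hjlt : ((x.1 : Fin n₂) : ℕ) < n₂ := (x.1 : Fin n₂).isLt
    exact unit_aux p n₂ hn₂ hn₂p ζ hζ (n₂ - ((x.1 : Fin n₂) : ℕ)) (by omega) (by omega)
end

section
/- Let p be a prime, O_L the ring of integers of a finite unramified extension of ℚ_p (a complete discrete valuation ring of characteristic 0 whose maximal ideal is generated by p), and k = O_L/pO_L its residue field. Let G' be a family of matrices over O_L, each having n columns (and arbitrary finite numbers of rows), such that the intersection over all D' ∈ G' of the kernels of the reductions D' mod p (as linear maps k^n → k^{rows(D')}) is {0}. Then there exist finitely many members D'_1,…,D'_m of G', with D'_i ∈ M_{n_i,n}(O_L), and matrices C_i ∈ M_{n,n_i}(O_L), 1 ≤ i ≤ m, such that Σ_{i=1}^m C_i D'_i ∈ GL_n(O_L). -/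
/-!
Since the common kernel of the reductions is trivial, the reduced rows of all the `D'` span
`k^n`, so `n` of them form a basis of `k^n`. Taking each `C_i` to be a matrix unit that places
one chosen row of `D'_i` into its own row of the sum, `Σ C_i D'_i` is the square matrix of the
chosen rows. Its reduction mod `p` is invertible, hence so is its determinant in the local
ring `O_L`.
-/

open Module Submodule Set

theorem span_range_eq_top_of_forall_dotProduct_eq_zero {K n J : Type*} [Field K] [Fintype n]
    [DecidableEq n] (v : J → n → K) (h : ∀ w, (∀ j, v j ⬝ᵥ w = 0) → w = 0) :
    span K (range v) = ⊤ := by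
  have hdual : span K (range (dotProductEquiv K n ∘ v)) = ⊤ :=
    span_eq_top_of_ne_zero fun w hw => by
      contrapose! hw
      exact h w (by simpa using hw)
  rwa [range_comp, span_image_linearEquiv, Submodule.map_eq_top_iff] at hdual

theorem exists_linearIndependent_comp_of_span_eq_top {K n J : Type*} [Field K] [Fintype n]
    {v : J → n → K} (hv : span K (range v) = ⊤) :
    ∃ g : n → J, LinearIndependent K (v ∘ g) := by
  obtain ⟨f, hf_mem, -, hf⟩ := exists_fun_fin_finrank_span_eq K (range v)
  choose g hg using hf_mem
  have e : n ≃ Fin (finrank K (span K (range v))) :=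
    Fintype.equivFinOfCardEq (by rw [hv, finrank_top, finrank_fintype_fun_eq_card])
  refine ⟨g ∘ e, ?_⟩
  have hvg : v ∘ g = f := funext hg
  rw [← Function.comp_assoc, hvg]
  exact hf.comp e e.injective

theorem Matrix.sum_single_one_mul_eq_of {R m c ι : Type*} [Semiring R] [Fintype m]
    [DecidableEq m] {r : ι → Type*} [∀ i, Fintype (r i)] [∀ i, DecidableEq (r i)]
    (D : (i : ι) → Matrix (r i) c R) (f : m → Σ i, r i) :
    ∑ t, single t (f t).2 (1 : R) * D (f t).1 = of fun t l => D (f t).1 (f t).2 l := by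
  ext a l
  rw [sum_apply, Finset.sum_eq_single a (fun t _ hta => single_mul_apply_of_ne _ _ _ _ _ hta.symm _)
    (by simp), single_mul_apply_same, one_mul, of_apply]

theorem Matrix.isUnit_of_isUnit_map {R S n : Type*} [CommRing R] [CommRing S] [Fintype n]
    [DecidableEq n] (f : R →+* S) [IsLocalHom f] {M : Matrix n n R} (hM : IsUnit (M.map f)) :
    IsUnit M := by
  rw [isUnit_iff_isUnit_det, ← isUnit_map_iff f, RingHom.map_det]
  exact (isUnit_iff_isUnit_det _).mp hM

theorem ker_zero_general
    (O : Type) [CommRing O] [IsDomain O] [IsDiscreteValuationRing O]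
    (n : ℕ) (ι : Type) (nr : ι → ℕ)
    (Dfam : (i : ι) → Matrix (Fin (nr i)) (Fin n) O)
    (hker : (⨅ i : ι, LinearMap.ker
        (Matrix.mulVecLin ((Dfam i).map (IsLocalRing.residue O)))) = ⊥) :
    ∃ (m : ℕ) (idx : Fin m → ι)
      (C : (t : Fin m) → Matrix (Fin n) (Fin (nr (idx t))) O),
      IsUnit (∑ t : Fin m, C t * Dfam (idx t)) := by
  let rows : (Σ i, Fin (nr i)) → Fin n → IsLocalRing.ResidueField O :=
    fun j => (Dfam j.1).map (IsLocalRing.residue O) j.2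
  have hspan : span _ (range rows) = ⊤ :=
    span_range_eq_top_of_forall_dotProduct_eq_zero rows fun w hw => by
      have hw_mem :
          w ∈ ⨅ i, LinearMap.ker (Matrix.mulVecLin ((Dfam i).map (IsLocalRing.residue O))) :=
        mem_iInf _ |>.mpr fun i => LinearMap.mem_ker.mpr (funext fun r => hw ⟨i, r⟩)
      simpa [hker] using hw_mem
  obtain ⟨g, hg⟩ := exists_linearIndependent_comp_of_span_eq_top hspan
  refine ⟨n, fun t => (g t).1, fun t => Matrix.single t (g t).2 1, ?_⟩
  rw [Matrix.sum_single_one_mul_eq_of Dfam g]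
  exact Matrix.isUnit_of_isUnit_map (IsLocalRing.residue O)
    (Matrix.linearIndependent_rows_iff_isUnit.mp hg)

/-- Lemma `ker_zero`.  If the reductions mod `p` of a family of matrices
over `O_L` (each with `n` columns) have trivial common kernel, then a finite
subfamily admits left factors whose combination is invertible. -/
theorem ker_zero
    (p : ℕ) (hp : p.Prime)
    (O : Type) [CommRing O] [IsDomain O] [IsDiscreteValuationRing O] [CharZero O]
    (hmax : IsLocalRing.maximalIdeal O = Ideal.span {(p : O)})
    (hfin : Finite (IsLocalRing.ResidueField O))
    (hcomplete : IsAdicComplete (IsLocalRing.maximalIdeal O) O)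
    (n : ℕ) (ι : Type) (nr : ι → ℕ)
    (Dfam : (i : ι) → Matrix (Fin (nr i)) (Fin n) O)
    (hker : (⨅ i : ι, LinearMap.ker
        (Matrix.mulVecLin ((Dfam i).map (IsLocalRing.residue O)))) = ⊥) :
    ∃ (m : ℕ) (idx : Fin m → ι)
      (C : (t : Fin m) → Matrix (Fin n) (Fin (nr (idx t))) O),
      IsUnit (∑ t : Fin m, C t * Dfam (idx t)) :=
  ker_zero_general O n ι nr Dfam hker
end

section
/- Let r, s ∈ ℤ, and in ℤ[[x₁,x₂,y₁,y₂]] define Φ₁ = x₁ + y₁ + x₁y₁ − s·x₂y₂ and Φ₂ = x₂ + y₂ + x₁y₂ + x₂y₁ + r·x₂y₂, and let g(x₁,x₂) = x₂·Σ_{t≥0}(−1)^t x₁^t ∈ ℤ[[x₁,x₂]] (the expansion of x₂(1+x₁)^{−1}). Then g(Φ₁, Φ₂) = F_{r,s}(g(x₁,x₂), g(y₁,y₂)) in ℤ[[x₁,x₂,y₁,y₂]]; that is, g is a homomorphism from the two-dimensional formal group law Φ = (Φ₁,Φ₂) (the Weil restriction of the multiplicative formal group law along ℤ[T]/(T²−rT+s)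 over ℤ) to the one-dimensional formal group law F_{r,s}. -/
/-!
Write `g = x₂ (1 + x₁)⁻¹`. Substituting series without constant term is a ring homomorphism
(Mathlib's `MvPowerSeries.subst`, with which `msubst` agrees), so the relations
`g · (1 + x₁) = x₂` and `(Σ sᵗxᵗyᵗ) · (1 - s x y) = 1` survive substitution. With `u = g(x)` and
`v = g(y)` one gets `1 + Φ₁ = (1 - s u v)(1 + x₁)(1 + y₁)` and `Φ₂ = (u + v + r u v)(1 + x₁)(1 + y₁)`,
and cancelling the unit `1 + Φ₁` in `g(Φ) (1 + Φ₁) = Φ₂` gives `g(Φ) = (u + v + r u v)/(1 - s u v)`.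
-/

/-- Substitution of a family of power series into a multivariate power series. -/
noncomputable def msubst {σ τ R : Type*} [Fintype σ] [DecidableEq σ] [CommRing R]
    (a : σ → MvPowerSeries τ R) (f : MvPowerSeries σ R) : MvPowerSeries τ R :=
  fun e => ∑ d ∈ Finset.Iic (Finsupp.equivFunOnFinite.symm (fun _ : σ => e.sum fun _ n => n)),
    MvPowerSeries.coeff (R := R) d f * MvPowerSeries.coeff (R := R) e (∏ s : σ, a s ^ d s)

open MvPowerSeries

section Substitution

variable {σ τ R : Type*} [Fintype σ] [CommRing R] {a : σ → MvPowerSeries τ R}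

theorem coeff_prod_pow_eq_zero (ha : ∀ i, constantCoeff (a i) = 0) {d : σ →₀ ℕ}
    {e : τ →₀ ℕ} {i : σ} (hi : e.degree < d i) : coeff e (∏ s, a s ^ d s) = 0 := by
  refine coeff_of_lt_order ?_
  calc (e.degree : ℕ∞) < d i := Nat.cast_lt.mpr hi
    _ ≤ ∑ s, (d s : ℕ∞) := by
        exact_mod_cast Finset.single_le_sum (fun _ _ => Nat.zero_le _) (Finset.mem_univ i)
    _ ≤ ∑ s, (a s ^ d s).order :=
        Finset.sum_le_sum fun s _ => le_order_pow_of_constantCoeff_eq_zero _ (ha s)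
    _ ≤ _ := le_order_prod _ _

theorem msubst_eq_subst [DecidableEq σ] (ha : ∀ i, constantCoeff (a i) = 0)
    (f : MvPowerSeries σ R) : msubst a f = subst a f := by
  ext e
  rw [coeff_subst (hasSubst_of_constantCoeff_zero ha), finsum_eq_sum_of_support_subset _ ?_]
  · refine Finset.sum_congr rfl fun d _ => ?_
    rw [smul_eq_mul, Finsupp.prod_fintype _ _ fun _ => pow_zero _]
  · intro d hd
    by_contra hle
    obtain ⟨i, hi⟩ : ∃ i, (e.sum fun _ n => n) < d i := by
      simpa [Finsupp.le_def] using hle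
    exact hd (by simp [Finsupp.prod_fintype _ _ fun _ => pow_zero _, coeff_prod_pow_eq_zero ha hi])

end Substitution

section SeriesInTwoVariables

variable (R : Type*) [CommRing R]

noncomputable def gSeries : MvPowerSeries (Fin 2) R :=
  fun m => if m 1 = 1 then (-1) ^ m 0 else 0

noncomputable def geomSeries (c : R) : MvPowerSeries (Fin 2) R :=
  fun m => if m 0 = m 1 then c ^ m 0 else 0

variable {R}

theorem coeff_gSeries (m : Fin 2 →₀ ℕ) :
    coeff m (gSeries R) = if m 1 = 1 then (-1) ^ m 0 else 0 := rfl

theorem coeff_geomSeries (c : R) (m : Fin 2 →₀ ℕ) :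
    coeff m (geomSeries R c) = if m 0 = m 1 then c ^ m 0 else 0 := rfl

theorem gSeries_mul_one_add_X : gSeries R * (1 + X 0) = X 1 := by
  ext m
  rw [mul_add, mul_one, map_add, X_def, coeff_mul_monomial, coeff_X]
  simp only [coeff_gSeries, Finsupp.le_def, Fin.forall_fin_two, Finsupp.ext_iff]
  rcases hm : m 0 with _ | k
  · simp
  · simp only [pow_succ]
    split_ifs <;> simp_all

theorem geomSeries_mul_one_sub_C_mul_X_mul_X (c : R) :
    geomSeries R c * (1 - C c * X 0 * X 1) = 1 := by
  ext m
  rw [mul_assoc, X_def, X_def, monomial_mul_monomial, ← monomial_zero_eq_C_apply,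
    monomial_mul_monomial, mul_sub, mul_one, map_sub, coeff_mul_monomial, coeff_one]
  simp only [coeff_geomSeries, Finsupp.le_def, Fin.forall_fin_two, Finsupp.ext_iff]
  rcases hm : m 0 with _ | k <;> rcases hm' : m 1 with _ | l <;> simp [hm, hm', pow_succ]

variable {τ : Type*} {a : Fin 2 → MvPowerSeries τ R}

theorem subst_gSeries_mul_one_add (ha : HasSubst a) :
    subst a (gSeries R) * (1 + a 0) = a 1 := by
  have h := congrArg (substAlgHom (R := R) ha) gSeries_mul_one_add_X
  rwa [map_mul, map_add, map_one, substAlgHom_X, substAlgHom_X, coe_substAlgHom] at h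

theorem subst_geomSeries_mul_one_sub (ha : HasSubst a) (c : R) :
    subst a (geomSeries R c) * (1 - C c * a 0 * a 1) = 1 := by
  have h := congrArg (substAlgHom (R := R) ha) (geomSeries_mul_one_sub_C_mul_X_mul_X c)
  rwa [map_mul, map_sub, map_one, map_mul, map_mul, substAlgHom_X, substAlgHom_X,
    coe_substAlgHom, subst_C] at h

end SeriesInTwoVariables

theorem g_hom_Phi_Frs_of_mul_eq {T : Type*} [CommRing T] (r s : T) {x₁ x₂ y₁ y₂ u v G Q : T}
    (hu : u * (1 + x₁) = x₂) (hv : v * (1 + y₁) = y₂)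
    (hG : G * (1 + (x₁ + y₁ + x₁ * y₁ - s * (x₂ * y₂))) =
      x₂ + y₂ + x₁ * y₂ + x₂ * y₁ + r * (x₂ * y₂))
    (hQ : Q * (1 - s * u * v) = 1) (hunit : IsUnit (1 + (x₁ + y₁ + x₁ * y₁ - s * (x₂ * y₂)))) :
    G = (u + v + r * u * v) * Q := by
  refine hunit.mul_left_injective ?_
  dsimp only
  rw [hG, ← hu, ← hv]
  linear_combination (-(u + v + r * u * v)) * ((1 + x₁) * (1 + y₁)) * hQ

/-- `g(x₁,x₂) = x₂(1+x₁)⁻¹` is a homomorphism from the Weil restriction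
`Φ = (Φ₁,Φ₂)` of the multiplicative formal group law along `ℤ[T]/(T²−rT+s)` to `F_{r,s}`. -/
theorem g_hom_Phi_Frs (r s : ℤ) :
    -- the two-dimensional formal group law Φ
    let Φ₁ : MvPowerSeries (Fin 2 ⊕ Fin 2) ℤ :=
      MvPowerSeries.X (Sum.inl 0) + MvPowerSeries.X (Sum.inr 0) +
        MvPowerSeries.X (Sum.inl 0) * MvPowerSeries.X (Sum.inr 0) -
        MvPowerSeries.C (σ := Fin 2 ⊕ Fin 2) (R := ℤ) s *
          (MvPowerSeries.X (Sum.inl 1) * MvPowerSeries.X (Sum.inr 1))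
    let Φ₂ : MvPowerSeries (Fin 2 ⊕ Fin 2) ℤ :=
      MvPowerSeries.X (Sum.inl 1) + MvPowerSeries.X (Sum.inr 1) +
        MvPowerSeries.X (Sum.inl 0) * MvPowerSeries.X (Sum.inr 1) +
        MvPowerSeries.X (Sum.inl 1) * MvPowerSeries.X (Sum.inr 0) +
        MvPowerSeries.C (σ := Fin 2 ⊕ Fin 2) (R := ℤ) r *
          (MvPowerSeries.X (Sum.inl 1) * MvPowerSeries.X (Sum.inr 1))
    -- g(x₁,x₂) = x₂(1+x₁)⁻¹ = x₂·Σ_t (−1)^t x₁^t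
    let g : MvPowerSeries (Fin 2) ℤ := fun m => if m 1 = 1 then (-1) ^ (m 0) else 0
    -- F_{r,s} = (x+y+rxy)·Σ_t s^t x^t y^t
    let geom : MvPowerSeries (Fin 2) ℤ := fun e => if e 0 = e 1 then s ^ (e 0) else 0
    let Frs : MvPowerSeries (Fin 2) ℤ :=
      (MvPowerSeries.X 0 + MvPowerSeries.X 1 +
        MvPowerSeries.C (σ := Fin 2) (R := ℤ) r * MvPowerSeries.X 0 * MvPowerSeries.X 1) * geom
    -- g(Φ₁,Φ₂) = F_{r,s}(g(x₁,x₂), g(y₁,y₂))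
    msubst (fun i : Fin 2 => if i = 0 then Φ₁ else Φ₂) g =
      msubst (fun i : Fin 2 =>
        if i = 0 then msubst (fun j : Fin 2 => MvPowerSeries.X (Sum.inl j)) g
        else msubst (fun j : Fin 2 => MvPowerSeries.X (Sum.inr j)) g) Frs := by
  intro Φ₁ Φ₂ g geom Frs
  have hΦ : ∀ i : Fin 2, constantCoeff (if i = 0 then Φ₁ else Φ₂) = 0 := by
    simp [Fin.forall_fin_two, Φ₁, Φ₂]
  have hL : ∀ j : Fin 2, constantCoeff (X (Sum.inl j) : MvPowerSeries (Fin 2 ⊕ Fin 2) ℤ) = 0 :=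
    fun _ => constantCoeff_X _
  have hR : ∀ j : Fin 2, constantCoeff (X (Sum.inr j) : MvPowerSeries (Fin 2 ⊕ Fin 2) ℤ) = 0 :=
    fun _ => constantCoeff_X _
  rw [msubst_eq_subst hΦ, msubst_eq_subst hL, msubst_eq_subst hR]
  set gx := subst (fun j : Fin 2 => (X (Sum.inl j) : MvPowerSeries (Fin 2 ⊕ Fin 2) ℤ)) g
  set gy := subst (fun j : Fin 2 => (X (Sum.inr j) : MvPowerSeries (Fin 2 ⊕ Fin 2) ℤ)) g
  have hgx : gx * (1 + X (Sum.inl 0)) = X (Sum.inl 1) :=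
    subst_gSeries_mul_one_add (hasSubst_of_constantCoeff_zero hL)
  have hgy : gy * (1 + X (Sum.inr 0)) = X (Sum.inr 1) :=
    subst_gSeries_mul_one_add (hasSubst_of_constantCoeff_zero hR)
  have hg : ∀ i : Fin 2, constantCoeff (if i = 0 then gx else gy) = 0 := by
    simpa [Fin.forall_fin_two] using
      (⟨congrArg constantCoeff hgx, congrArg constantCoeff hgy⟩ : _ ∧ _)
  have hgSubst := hasSubst_of_constantCoeff_zero hg
  rw [msubst_eq_subst hg]
  simp only [Frs, subst_mul hgSubst, subst_add hgSubst, subst_X hgSubst, subst_C]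
  exact g_hom_Phi_Frs_of_mul_eq (C r) (C s) hgx hgy
    (subst_gSeries_mul_one_add (hasSubst_of_constantCoeff_zero hΦ))
    (subst_geomSeries_mul_one_sub hgSubst s) (isUnit_iff_constantCoeff.mpr (by simp))
end

section
/- Let r, s ∈ ℤ, let ℤ[ξ] = ℤ[T]/(T²−rT+s) (so ξ² = rξ − s), and let f(x) = x·Σ_{t≥0}(−ξ)^t x^t ∈ ℤ[ξ][[x]] (the expansion of x(1+ξx)^{−1}). Then f(F_{r,s}(x,y)) = f(x) + f(y) + (r−2ξ)·f(x)·f(y) in ℤ[ξ][[x,y]]; that is, f is a homomorphism from F_{r,s} to the formal group law F_q(x,y) = x + y + (r−2ξ)xy over ℤ[ξ], where (r−2ξ)² = r²−4s = q. -/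
/-!
Every substitution `u = f(a)` of a series `a` without constant term satisfies
`u (1 + ξ a) = a`, because `f(x) = x / (1 + ξ x)`. With `F = F_{r,s}(x,y)`, the relation
`ξ² = rξ − s` gives `(1 + ξx)(1 + ξy) = (1 − sxy)(1 + ξF)`; multiplied by this unit, both sides
of the claimed identity become `x + y + rxy`.
-/

/-- Substitution of a multivariate power series into a one-variable power series. -/
noncomputable def psubst {τ R : Type*} [CommRing R]
    (a : MvPowerSeries τ R) (f : PowerSeries R) : MvPowerSeries τ R :=
  fun e => ∑ t ∈ Finset.range ((e.sum fun _ n => n) + 1),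
    PowerSeries.coeff t f * MvPowerSeries.coeff e (a ^ t)

open PowerSeries

section Substitution

variable {τ R : Type*} [CommRing R]

theorem psubst_eq_subst {a : MvPowerSeries τ R} (ha : MvPowerSeries.constantCoeff a = 0)
    (f : R⟦X⟧) : psubst a f = f.subst a := by
  ext e
  rw [coeff_subst (HasSubst.of_constantCoeff_zero ha),
    finsum_eq_sum_of_support_subset _ (s := Finset.range (e.degree + 1))]
  · rfl
  · intro t ht
    contrapose! ht
    rw [Finset.coe_range, Set.mem_Iio, not_lt] at ht
    rw [Function.notMem_support, MvPowerSeries.coeff_eq_zero_of_constantCoeff_nilpotent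
      (m := 1) (by simp [ha]) (by omega), smul_zero]

theorem mk_neg_pow_mul_one_add_C_mul_X (ξ : R) :
    (mk fun t => if t = 0 then 0 else (-ξ) ^ (t - 1)) * (1 + C ξ * X) = X := by
  ext (_ | _ | n) <;> simp [mul_add, ← mul_assoc, mul_comm _ X, coeff_X, pow_succ]

theorem psubst_mul_one_add_C_mul {a : MvPowerSeries τ R}
    (ha : MvPowerSeries.constantCoeff a = 0) (ξ : R) :
    psubst a (mk fun t => if t = 0 then 0 else (-ξ) ^ (t - 1)) *
      (1 + MvPowerSeries.C ξ * a) = a := by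
  have hsub := HasSubst.of_constantCoeff_zero ha
  have h := congrArg (subst a) (mk_neg_pow_mul_one_add_C_mul_X ξ)
  rwa [subst_mul hsub, subst_add hsub, subst_mul hsub, subst_C, subst_X hsub,
    ← map_one (C (R := R)), subst_C, map_one, ← psubst_eq_subst ha] at h

end Substitution

section GeometricSeries

variable {R : Type*} [CommRing R]

theorem mk_pow_mul_one_sub_C_mul_X (s : R) : mk (s ^ ·) * (1 - C s * X) = 1 := by
  simpa [rescale_mk] using congrArg (rescale s) (mk_one_mul_one_sub_eq_one R)

theorem coeff_subst_X_mul_X (g : R⟦X⟧) (e : Fin 2 →₀ ℕ) :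
    MvPowerSeries.coeff e
        (g.subst (MvPowerSeries.X 0 * MvPowerSeries.X 1 : MvPowerSeries (Fin 2) R)) =
      if e 0 = e 1 then coeff (e 0) g else 0 := by
  classical
  have hsub : HasSubst (MvPowerSeries.X 0 * MvPowerSeries.X 1 : MvPowerSeries (Fin 2) R) :=
    HasSubst.of_constantCoeff_zero (by simp)
  have hpow (d : ℕ) : (MvPowerSeries.X 0 * MvPowerSeries.X 1 : MvPowerSeries (Fin 2) R) ^ d =
      MvPowerSeries.monomial (Finsupp.single 0 d + Finsupp.single 1 d) 1 := by
    rw [mul_pow, MvPowerSeries.X_pow_eq, MvPowerSeries.X_pow_eq,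
      MvPowerSeries.monomial_mul_monomial, one_mul]
  have hdiag (d : ℕ) : e = Finsupp.single 0 d + Finsupp.single 1 d ↔ e 0 = d ∧ e 1 = d := by
    simp only [Finsupp.ext_iff, Fin.forall_fin_two, Finsupp.add_apply]
    rw [Finsupp.single_eq_same, Finsupp.single_eq_same, Finsupp.single_eq_of_ne (by decide),
      Finsupp.single_eq_of_ne (by decide), add_zero, zero_add]
  rw [coeff_subst hsub, finsum_eq_single _ (e 0)]
  · simp only [hpow, MvPowerSeries.coeff_monomial, hdiag, true_and, eq_comm (a := e 1)]
    split_ifs <;> simp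
  · intro d hd
    simp [hpow, MvPowerSeries.coeff_monomial, hdiag, Ne.symm hd]

theorem mul_one_sub_C_mul_X_mul_X_eq_one {s : R} {g : MvPowerSeries (Fin 2) R}
    (hg : ∀ e, MvPowerSeries.coeff e g = if e 0 = e 1 then s ^ e 0 else 0) :
    g * (1 - MvPowerSeries.C s * (MvPowerSeries.X 0 * MvPowerSeries.X 1)) = 1 := by
  have hsub : HasSubst (MvPowerSeries.X 0 * MvPowerSeries.X 1 : MvPowerSeries (Fin 2) R) :=
    HasSubst.of_constantCoeff_zero (by simp)
  have hg_subst : g = (mk (s ^ ·)).subst (MvPowerSeries.X 0 * MvPowerSeries.X 1) := by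
    ext e
    rw [hg, coeff_subst_X_mul_X, coeff_mk]
  have h := congrArg (subst (MvPowerSeries.X 0 * MvPowerSeries.X 1 : MvPowerSeries (Fin 2) R))
    (mk_pow_mul_one_sub_C_mul_X s)
  rwa [subst_mul hsub, subst_sub hsub, subst_mul hsub, subst_C, subst_X hsub,
    ← map_one (C (R := R)), subst_C, map_one, ← hg_subst] at h

end GeometricSeries

theorem eq_add_add_mul_of_mul_one_add {A : Type*} [CommRing A] {r s ξ x y F u v w : A}
    (hξ : ξ ^ 2 = r * ξ - s) (hF : F * (1 - s * (x * y)) = x + y + r * x * y)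
    (hu : u * (1 + ξ * F) = F) (hv : v * (1 + ξ * x) = x) (hw : w * (1 + ξ * y) = y)
    (hunit : IsUnit ((1 + ξ * x) * (1 + ξ * y))) :
    u = v + w + (r - 2 * ξ) * (v * w) := by
  refine hunit.mul_right_cancel ?_
  linear_combination u * x * y * hξ + (1 - s * (x * y)) * hu + (1 - u * ξ) * hF
    - (1 + ξ * y) * hv - (1 + ξ * x) * hw - (r - 2 * ξ) * (w * (1 + ξ * y) * hv + x * hw)

/-- `f(x) = x(1+ξx)⁻¹` is a homomorphism from `F_{r,s}` to
`F_q(x,y) = x + y + (r−2ξ)xy` over `ℤ[ξ] = ℤ[T]/(T²−rT+s)`. -/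
theorem f_hom_Frs_Fq (r s : ℤ) :
    let R := AdjoinRoot ((Polynomial.X : Polynomial ℤ) ^ 2
      - Polynomial.C r * Polynomial.X + Polynomial.C s)
    let ξ : R := AdjoinRoot.root _
    -- f(x) = x(1+ξx)⁻¹ = Σ_{t≥1} (−ξ)^{t−1} x^t
    let f : PowerSeries R := PowerSeries.mk fun t => if t = 0 then 0 else (-ξ) ^ (t - 1)
    -- F_{r,s} over ℤ[ξ]
    let geom : MvPowerSeries (Fin 2) R := fun e => if e 0 = e 1 then (s : R) ^ (e 0) else 0
    let Frs : MvPowerSeries (Fin 2) R :=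
      (MvPowerSeries.X 0 + MvPowerSeries.X 1 +
        MvPowerSeries.C (σ := Fin 2) (R := R) (r : R) * MvPowerSeries.X 0 * MvPowerSeries.X 1) * geom
    -- f(F_{r,s}(x,y)) = f(x) + f(y) + (r−2ξ)·f(x)·f(y)
    psubst Frs f =
      psubst (MvPowerSeries.X 0) f + psubst (MvPowerSeries.X 1) f +
        MvPowerSeries.C (σ := Fin 2) (R := R) ((r : R) - 2 * ξ) *
          (psubst (MvPowerSeries.X 0) f * psubst (MvPowerSeries.X 1) f) := by
  intro R ξ f geom Frs
  have hξ : ξ ^ 2 = r * ξ - s := by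
    have h := AdjoinRoot.eval₂_root ((Polynomial.X : Polynomial ℤ) ^ 2
      - Polynomial.C r * Polynomial.X + Polynomial.C s)
    simp only [Polynomial.eval₂_add, Polynomial.eval₂_sub, Polynomial.eval₂_mul,
      Polynomial.eval₂_pow, Polynomial.eval₂_X, Polynomial.eval₂_C,
      eq_intCast (AdjoinRoot.of _)] at h
    linear_combination h
  have hF : Frs * (1 - MvPowerSeries.C (s : R) * (MvPowerSeries.X 0 * MvPowerSeries.X 1)) =
      MvPowerSeries.X 0 + MvPowerSeries.X 1 +
        MvPowerSeries.C (r : R) * MvPowerSeries.X 0 * MvPowerSeries.X 1 := by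
    rw [mul_assoc, mul_one_sub_C_mul_X_mul_X_eq_one (g := geom) fun _ => rfl, mul_one]
  have hFrs : MvPowerSeries.constantCoeff Frs = 0 := by simp [Frs]
  have hunit : IsUnit ((1 + MvPowerSeries.C ξ * MvPowerSeries.X 0) *
      (1 + MvPowerSeries.C ξ * MvPowerSeries.X 1) : MvPowerSeries (Fin 2) R) := by
    simp [MvPowerSeries.isUnit_iff_constantCoeff]
  rw [map_sub, map_mul, map_ofNat]
  exact eq_add_add_mul_of_mul_one_add (by rw [← map_pow, hξ, map_sub, map_mul]) hF
    (psubst_mul_one_add_C_mul hFrs ξ)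
    (psubst_mul_one_add_C_mul (MvPowerSeries.constantCoeff_X 0) ξ)
    (psubst_mul_one_add_C_mul (MvPowerSeries.constantCoeff_X 1) ξ) hunit
end
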